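/- arXiv:2010.14467 — 10 statements merged into one kernel-verified Lean document; each statement's English description precedes it below -/
import Mathlib

section
/- For every p ≥ 1, every bipartite permutation graph G containing no induced pK_2 (the disjoint union of p edges) is a letter graph over an alphabet of at most (p − 1)(3p − 2) + 1 letters; that is, there exist k ≤ (p − 1)(3p − 2) + 1, a set D ⊆ {1, …, k} × {1, …, k}, an enumeration v_1, …, v_N of the vertices of G, and a map w : {1, …, N} → {1, …, k} such that for all 1 ≤ i < j ≤ N, v_i and v_j are adjacent if and only if (w(i), w(j)) ∈ D. -/
open SimpleGraph

/-- `G` has a letter-graph representation with decoder `D` over the alphabet `Fin k`. -/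
def LetterRep {V : Type*} [Fintype V] (k : ℕ) (D : Set (Fin k × Fin k))
    (G : SimpleGraph V) : Prop :=
  ∃ (v : Fin (Fintype.card V) ≃ V) (w : Fin (Fintype.card V) → Fin k),
    ∀ i j : Fin (Fintype.card V), i < j →
      (G.Adj (v i) (v j) ↔ (w i, w j) ∈ D)

/-- A bipartite permutation graph is a letter graph with the path decoder
over some finite alphabet. -/
def IsBPG {V : Type*} [Fintype V] (G : SimpleGraph V) : Prop :=
  ∃ (k : ℕ) (v : Fin (Fintype.card V) ≃ V) (w : Fin (Fintype.card V) → Fin k),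
    ∀ i j : Fin (Fintype.card V), i < j →
      (G.Adj (v i) (v j) ↔ (w j : ℕ) = (w i : ℕ) + 1)

/-- `pK2 p` is the disjoint union of `p` copies of `K_2`. -/
def pK2 (p : ℕ) : SimpleGraph (Fin p × Fin 2) :=
  SimpleGraph.fromRel (fun x y => x.1 = y.1)

/-- A finite set of naturals with no `(m+1)`-element subset whose elements are
pairwise at distance `≥ 3` satisfies `|S ∪ (S+1)| ≤ 4m`. -/
lemma sep_card : ∀ (m : ℕ) (S : Finset ℕ),
    (¬ ∃ f : Fin (m + 1) → ℕ, (∀ t, f t ∈ S) ∧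
      ∀ i j : Fin (m + 1), i < j → f i + 3 ≤ f j) →
    (S ∪ S.image (· + 1)).card ≤ 4 * m := by
  intro m
  induction m with
  | zero =>
    intro S h
    have hS : S = ∅ := by
      by_contra hne
      obtain ⟨s, hs⟩ := Finset.nonempty_iff_ne_empty.2 hne
      exact h ⟨fun _ => s, fun _ => hs, fun i j hij => by
        have hi := i.isLt; have hj := j.isLt
        have := Fin.lt_iff_val_lt_val.mp hij
        omega⟩
    simp [hS]
  | succ m ih =>
    intro S h
    rcases S.eq_empty_or_nonempty with rfl | hne
    · simp
    have hs := S.min'_mem hne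
    set s := S.min' hne with hsdef
    set S' := S.filter (fun x => s + 3 ≤ x) with hS'def
    have h' : ¬ ∃ f : Fin (m + 1) → ℕ, (∀ t, f t ∈ S') ∧
        ∀ i j : Fin (m + 1), i < j → f i + 3 ≤ f j := by
      rintro ⟨f, hf, hgap⟩
      apply h
      refine ⟨Fin.cases s f, fun t => ?_, fun i j hij => ?_⟩
      · induction t using Fin.cases with
        | zero => simpa using hs
        | succ t => simpa using (Finset.mem_filter.mp (hf t)).1
      · induction i using Fin.cases with
        | zero =>
          induction j using Fin.cases with
          | zero => exact absurd hij (lt_irrefl _)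
          | succ j => simpa using (Finset.mem_filter.mp (hf j)).2
        | succ i =>
          induction j using Fin.cases with
          | zero => exact absurd hij (by simp)
          | succ j => simpa using hgap i j (by simpa using hij)
    have hcard' := ih S' h'
    have hsub : S ∪ S.image (· + 1) ⊆
        ({s, s+1, s+2, s+3} : Finset ℕ) ∪ (S' ∪ S'.image (· + 1)) := by
      intro x hx
      simp only [Finset.mem_union, Finset.mem_image, Finset.mem_insert,
        Finset.mem_singleton] at hx ⊢
      rcases hx with hx | ⟨y, hy, rfl⟩
      · have h1 : s ≤ x := S.min'_le x hx
        by_cases h2 : s + 3 ≤ x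
        · exact Or.inr (Or.inl (Finset.mem_filter.mpr ⟨hx, h2⟩))
        · rcases (by omega : x = s ∨ x = s+1 ∨ x = s+2) with rfl|rfl|rfl <;> tauto
      · have h1 : s ≤ y := S.min'_le y hy
        by_cases h2 : s + 3 ≤ y
        · exact Or.inr (Or.inr ⟨y, Finset.mem_filter.mpr ⟨hy, h2⟩, rfl⟩)
        · rcases (by omega : y = s ∨ y = s+1 ∨ y = s+2) with rfl|rfl|rfl <;> tauto
    have h4 : ({s, s+1, s+2, s+3} : Finset ℕ).card ≤ 4 := by
      have hsub4 : ({s, s+1, s+2, s+3} : Finset ℕ) ⊆ (Finset.range 4).image (· + s) := by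
        intro x hx
        simp only [Finset.mem_insert, Finset.mem_singleton] at hx
        simp only [Finset.mem_image, Finset.mem_range]
        rcases hx with rfl | rfl | rfl | rfl
        · exact ⟨0, by omega, by omega⟩
        · exact ⟨1, by omega, by omega⟩
        · exact ⟨2, by omega, by omega⟩
        · exact ⟨3, by omega, by omega⟩
      exact (Finset.card_le_card hsub4).trans (Finset.card_image_le.trans (by simp))
    calc (S ∪ S.image (· + 1)).card
        ≤ (({s, s+1, s+2, s+3} : Finset ℕ) ∪ (S' ∪ S'.image (· + 1))).card :=
          Finset.card_le_card hsub
      _ ≤ ({s, s+1, s+2, s+3} : Finset ℕ).card + (S' ∪ S'.image (· + 1)).card :=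
          Finset.card_union_le _ _
      _ ≤ 4 + 4 * m := Nat.add_le_add h4 hcard'
      _ ≤ 4 * (m + 1) := by omega

/-- Every `pK_2`-free bipartite permutation graph is a letter graph over an
alphabet of at most `(p-1)(3p-2)+1` letters. -/
theorem pK2_free_bpg_lettericity (p : ℕ) (hp : 1 ≤ p)
    {V : Type*} [Fintype V] (G : SimpleGraph V) (hG : IsBPG G)
    (hfree : ¬ Nonempty (pK2 p ↪g G)) :
    ∃ k ≤ (p - 1) * (3 * p - 2) + 1, ∃ D : Set (Fin k × Fin k), LetterRep k D G := by
  classical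
  obtain ⟨m, rfl⟩ : ∃ m, p = m + 1 := ⟨p - 1, by omega⟩
  obtain ⟨k, v, w, hv⟩ := hG
  -- the set of letter values at which an actual edge occurs
  set S : Finset ℕ := (Finset.range k).filter
    (fun s => ∃ i j : Fin (Fintype.card V), i < j ∧ (w i : ℕ) = s ∧ (w j : ℕ) = s + 1)
    with hSdef
  -- full adjacency characterization
  have hadj : ∀ i j : Fin (Fintype.card V), G.Adj (v i) (v j) ↔
      ((i < j ∧ (w j : ℕ) = (w i : ℕ) + 1) ∨ (j < i ∧ (w i : ℕ) = (w j : ℕ) + 1)) := by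
    intro i j
    rcases lt_trichotomy i j with h | h | h
    · rw [hv i j h]
      constructor
      · intro hw; exact Or.inl ⟨h, hw⟩
      · rintro (⟨_, hw⟩ | ⟨h', _⟩)
        · exact hw
        · exact absurd h (not_lt.2 h'.le)
    · subst h
      exact iff_of_false (G.irrefl) (by rintro (⟨h', _⟩ | ⟨h', _⟩) <;> exact lt_irrefl _ h')
    · rw [G.adj_comm, hv j i h]
      constructor
      · intro hw; exact Or.inr ⟨h, hw⟩
      · rintro (⟨h', _⟩ | ⟨_, hw⟩)
        · exact absurd h (not_lt.2 h'.le)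
        · exact hw
  -- there is no (m+1)-family of letters in S pairwise ≥ 3 apart
  have hsep : ¬ ∃ f : Fin (m + 1) → ℕ, (∀ t, f t ∈ S) ∧
      ∀ i j : Fin (m + 1), i < j → f i + 3 ≤ f j := by
    rintro ⟨f, hf, hgap⟩
    have hwit : ∀ t, ∃ i j : Fin (Fintype.card V),
        i < j ∧ (w i : ℕ) = f t ∧ (w j : ℕ) = f t + 1 := by
      intro t
      have := hf t
      rw [hSdef, Finset.mem_filter] at this
      exact this.2
    choose I J hlt hI hJ using fun t => hwit t
    have hfar : ∀ t t' : Fin (m+1), t ≠ t' → (f t + 3 ≤ f t' ∨ f t' + 3 ≤ f t) :=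
      fun t t' h => (lt_or_gt_of_ne h).imp (hgap _ _) (hgap _ _)
    set pos : Fin (m+1) × Fin 2 → Fin (Fintype.card V) :=
      fun x => if x.2 = 0 then I x.1 else J x.1 with hposdef
    have hletter : ∀ (t : Fin (m+1)) (a : Fin 2),
        (w (pos (t, a)) : ℕ) = f t + (a : ℕ) := by
      intro t a
      fin_cases a
      · simpa [hposdef] using hI t
      · simpa [hposdef] using hJ t
    set F : Fin (m+1) × Fin 2 → V := fun x => v (pos x) with hFdef
    have hFinj : Function.Injective F := by
      intro x y hxy
      have hpos : pos x = pos y := v.injective hxy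
      obtain ⟨tx, ax⟩ := x
      obtain ⟨ty, ay⟩ := y
      have hL : f tx + (ax : ℕ) = f ty + (ay : ℕ) := by
        rw [← hletter tx ax, ← hletter ty ay, hpos]
      have h1 : tx = ty := by
        by_contra h
        have hx2 := ax.isLt
        have hy2 := ay.isLt
        rcases hfar _ _ h with h' | h' <;> omega
      have h2 : ax = ay := by
        rw [h1] at hL
        exact Fin.ext (by omega)
      exact Prod.ext h1 h2
    have hedge : ∀ t, G.Adj (v (I t)) (v (J t)) := by
      intro t
      exact (hv _ _ (hlt t)).2 (by rw [hJ t, hI t])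
    have hiff : ∀ a b : Fin (m+1) × Fin 2, G.Adj (F a) (F b) ↔ (pK2 (m+1)).Adj a b := by
      rintro ⟨t, c⟩ ⟨t', c'⟩
      by_cases ht : t = t'
      · subst ht
        fin_cases c <;> fin_cases c'
        · simp only [hFdef]
          exact iff_of_false (G.irrefl) (by simp [pK2])
        · simp only [hFdef, hposdef]
          exact iff_of_true (by simpa using hedge t) (by simp [pK2])
        · simp only [hFdef, hposdef]
          refine iff_of_true ?_ (by simp [pK2])
          have := hedge t
          simpa [G.adj_comm] using this.symm
        · simp only [hFdef]
          exact iff_of_false (G.irrefl) (by simp [pK2])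
      · refine iff_of_false ?_ ?_
        · rw [hFdef]
          simp only
          rw [hadj (pos (t, c)) (pos (t', c'))]
          have h1 := hletter t c
          have h2 := hletter t' c'
          have hc := c.isLt
          have hc' := c'.isLt
          rintro (⟨-, hw⟩ | ⟨-, hw⟩) <;>
            rcases hfar t t' ht with h' | h' <;> omega
        · simp only [pK2, SimpleGraph.fromRel_adj, ne_eq]
          rintro ⟨-, h | h⟩
          · exact ht h
          · exact ht h.symm
    exact hfree ⟨⟨⟨F, hFinj⟩, fun {a b} => hiff a b⟩⟩
  -- the relevant letters
  set R : Finset ℕ := S ∪ S.image (· + 1) with hRdef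
  have hRcard : R.card ≤ 4 * m := sep_card m S hsep
  -- the recoding
  set k' : ℕ := R.card + 1 with hk'def
  set φ : ℕ → Fin k' := fun x =>
    if h : x ∈ R then Fin.succ (R.equivFin ⟨x, h⟩) else 0 with hφdef
  have hφ0 : ∀ x, x ∉ R → φ x = 0 := by
    intro x hx; simp [hφdef, hx]
  have hφinj : ∀ x y, x ∈ R → φ x = φ y → x = y := by
    intro x y hx hxy
    by_cases hy : y ∈ R
    · simp only [hφdef, dif_pos hx, dif_pos hy] at hxy
      have := R.equivFin.injective (Fin.succ_injective _ hxy)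
      exact Subtype.mk_eq_mk.mp this
    · rw [hφ0 y hy] at hxy
      simp only [hφdef, dif_pos hx] at hxy
      exact absurd hxy (Fin.succ_ne_zero _)
  refine ⟨k', ?_, {q | ∃ s ∈ S, q = (φ s, φ (s + 1))}, v, fun i => φ (w i), ?_⟩
  · -- the cardinality bound
    have hm : 4 * m ≤ m * (3 * m + 1) := by
      rcases Nat.eq_zero_or_pos m with rfl | hm0
      · simp
      · have h4' : 4 ≤ 3 * m + 1 := by omega
        calc 4 * m ≤ (3 * m + 1) * m := Nat.mul_le_mul_right m h4'
          _ = m * (3 * m + 1) := Nat.mul_comm _ _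
    have he : (m + 1 - 1) * (3 * (m + 1) - 2) = m * (3 * m + 1) := by
      have e1 : m + 1 - 1 = m := by omega
      have e2 : 3 * (m + 1) - 2 = 3 * m + 1 := by omega
      rw [e1, e2]
    rw [he]
    omega
  · intro i j hij
    rw [hv i j hij]
    constructor
    · intro hw
      have hwS : (w i : ℕ) ∈ S := by
        rw [hSdef, Finset.mem_filter]
        exact ⟨Finset.mem_range.mpr (w i).isLt, i, j, hij, rfl, hw⟩
      refine ⟨(w i : ℕ), hwS, ?_⟩
      show (φ (w i : ℕ), φ (w j : ℕ)) = (φ (w i : ℕ), φ ((w i : ℕ) + 1))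
      rw [hw]
    · rintro ⟨s, hsS, heq⟩
      have hsR : s ∈ R := Finset.mem_union_left _ hsS
      have hs1R : s + 1 ∈ R :=
        Finset.mem_union_right _ (Finset.mem_image.mpr ⟨s, hsS, rfl⟩)
      have h1 : φ (w i : ℕ) = φ s := congrArg Prod.fst heq
      have h2 : φ (w j : ℕ) = φ (s + 1) := congrArg Prod.snd heq
      have e1 : s = (w i : ℕ) := hφinj s (w i : ℕ) hsR h1.symm
      have e2 : s + 1 = (w j : ℕ) := hφinj (s + 1) (w j : ℕ) hs1R h2.symm
      omega
end

section
/- For n ≥ 1, let F* be the disjoint union of the stars K_{1,⌊n/1⌋}, K_{1,⌊n/2⌋}, …, K_{1,⌊n/n⌋}. Then every star forest with at most n vertices is isomorphic to an induced subgraph of F*; moreover, F* has exactly Σ_{i=1}^{n} (⌊n/i⌋ + 1) vertices, and this number is at most n·(ln n + 2). -/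
open SimpleGraph

/-- The star `K_{1,p}`, with center `0`. -/
def starGraph (p : ℕ) : SimpleGraph (Fin (p + 1)) :=
  SimpleGraph.fromRel (fun i _ => i = 0)

/-- A star forest: every connected component is a star `K_{1,p}` for some `p ≥ 0`. -/
def IsStarForest {V : Type*} (G : SimpleGraph V) : Prop :=
  ∀ c : G.ConnectedComponent, ∃ p, Nonempty (G.induce c.supp ≃g _root_.starGraph p)

/-- The star forest `F* = K_{1,⌊n/1⌋} + K_{1,⌊n/2⌋} + ⋯ + K_{1,⌊n/n⌋}`;
the `i`-th summand (for `i : Fin n`) is the star `K_{1, n/(i+1)}` with center `⟨i, 0⟩`. -/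
def Fstar (n : ℕ) : SimpleGraph (Σ i : Fin n, Fin (n / ((i : ℕ) + 1) + 1)) :=
  SimpleGraph.fromRel (fun x y => x.1 = y.1 ∧ (x.2 : ℕ) = 0)
/-!
Sort the components of a star forest on at most `n` vertices by decreasing size. The `i`-th
component (counting from `1`) has at most `n / i` vertices, because the `i` components up to it
are at least as large and together have at most `n` vertices; so it fits into the star
`K_{1,⌊n/i⌋}` of `F*`, and distinct components land in distinct stars. The vertex count of `F*`
is at most `n · H_n + n ≤ n (ln n + 2)`.
-/

theorem exists_equiv_fin_antitone {C β : Type*} [Fintype C] [LinearOrder β] (s : C → β) :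
    ∃ g : Fin (Fintype.card C) ≃ C, Antitone (s ∘ g) := by
  let e := (Fintype.equivFin C).symm
  let f : Fin (Fintype.card C) → βᵒᵈ := OrderDual.toDual ∘ s ∘ e
  exact ⟨(Tuple.sort f).trans e, fun i j hij => Tuple.monotone_sort f hij⟩

theorem Fin.succ_mul_le_sum_of_antitone {k : ℕ} {a : Fin k → ℕ} (ha : Antitone a)
    (i : Fin k) : ((i : ℕ) + 1) * a i ≤ ∑ j, a j :=
  calc ((i : ℕ) + 1) * a i = ∑ _j ∈ Finset.Iic i, a i := by simp
    _ ≤ ∑ j ∈ Finset.Iic i, a j := Finset.sum_le_sum fun j hj => ha (Finset.mem_Iic.mp hj)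
    _ ≤ ∑ j, a j := Finset.sum_le_sum_of_subset (Finset.subset_univ _)

theorem exists_embedding_fin_succ_mul_le_sum {C : Type*} [Fintype C] (s : C → ℕ) :
    ∃ r : C ↪ Fin (Fintype.card C), ∀ c, ((r c : ℕ) + 1) * s c ≤ ∑ d, s d := by
  obtain ⟨g, hg⟩ := exists_equiv_fin_antitone s
  refine ⟨g.symm.toEmbedding, fun c => ?_⟩
  simpa [← g.sum_comp] using Fin.succ_mul_le_sum_of_antitone hg (g.symm c)

theorem SimpleGraph.sum_natCard_connectedComponent_supp {V : Type*} [Fintype V]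
    (G : SimpleGraph V) [Fintype G.ConnectedComponent] :
    ∑ c : G.ConnectedComponent, Nat.card c.supp = Fintype.card V := by
  classical
  rw [← Fintype.card_congr (Equiv.sigmaFiberEquiv G.connectedComponentMk), Fintype.card_sigma]
  exact Finset.sum_congr rfl fun c _ =>
    Nat.card_eq_fintype_card.trans (Fintype.card_congr (Equiv.refl _))

theorem starGraph_adj_iff {p : ℕ} {i j : Fin (p + 1)} :
    (_root_.starGraph p).Adj i j ↔ i ≠ j ∧ (i = 0 ∨ j = 0) :=
  SimpleGraph.starGraph_adj

/-- `α` disjoint copies of the infinite star with center `0`. -/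
def starUnion (α : Type*) : SimpleGraph (α × ℕ) :=
  SimpleGraph.fromRel fun x y => x.1 = y.1 ∧ x.2 = 0

@[simp]
theorem starUnion_adj {α : Type*} {a b : α} {i j : ℕ} :
    (starUnion α).Adj (a, i) (b, j) ↔ a = b ∧ i ≠ j ∧ (i = 0 ∨ j = 0) := by
  simp only [starUnion, fromRel_adj, ne_eq, Prod.mk.injEq]
  grind

def starUnion.map {α β : Type*} (f : α ↪ β) : starUnion α ↪g starUnion β where
  toFun := Prod.map f id
  inj' := f.injective.prodMap Function.injective_id
  map_rel_iff' {x y} := by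
    obtain ⟨a, i⟩ := x
    obtain ⟨b, j⟩ := y
    simp

def Fstar.toStarUnion (n : ℕ) : Fstar n ↪g starUnion (Fin n) where
  toFun x := (x.1, x.2)
  inj' := by
    rintro ⟨i, a⟩ ⟨j, b⟩ h
    simp only [Prod.mk.injEq] at h
    obtain ⟨rfl, h⟩ := h
    rw [Fin.val_inj.mp h]
  map_rel_iff' {x y} := by
    obtain ⟨i, a⟩ := x
    obtain ⟨j, b⟩ := y
    change (starUnion _).Adj (i, a) (j, b) ↔ _
    by_cases hij : i = j
    · subst hij
      simp [Fstar, Fin.val_inj]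
    · simp [Fstar, hij, Ne.symm hij]

def SimpleGraph.Embedding.ofCompEq {U V W : Type*} {G : SimpleGraph U} {H : SimpleGraph V}
    {K : SimpleGraph W} (e : H ↪g K) (f : G ↪g K) (F : U → V) (hF : ∀ u, e (F u) = f u) :
    G ↪g H where
  toFun := F
  inj' u v h := f.injective (by rw [← hF, ← hF, h])
  map_rel_iff' {u v} := by
    change H.Adj (F u) (F v) ↔ _
    rw [← e.map_rel_iff, hF, hF, f.map_rel_iff]

theorem IsStarForest.exists_embedding_starUnion {V : Type*} {G : SimpleGraph V}
    (hG : IsStarForest G) :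
    ∃ ψ : G ↪g starUnion G.ConnectedComponent, ∀ v, (ψ v).1 = G.connectedComponentMk v ∧
      (ψ v).2 < Nat.card (G.connectedComponentMk v).supp := by
  choose p hφ using hG
  let φ (c : G.ConnectedComponent) : G.induce c.supp ≃g _root_.starGraph (p c) := (hφ c).some
  let pos v : ℕ := φ (G.connectedComponentMk v) ⟨v, rfl⟩
  have pos_eq (c : G.ConnectedComponent) (x : c.supp) : pos x = φ c x := by
    obtain ⟨x, rfl⟩ := x
    rfl
  have adj_iff (c : G.ConnectedComponent) (x y : c.supp) :
      G.Adj x y ↔ pos x ≠ pos y ∧ (pos x = 0 ∨ pos y = 0) := by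
    rw [pos_eq, pos_eq, ← induce_adj, ← (φ c).map_adj_iff, starGraph_adj_iff]
    simp only [ne_eq, Fin.val_inj, Fin.val_eq_zero_iff]
  refine ⟨{ toFun := fun v => (G.connectedComponentMk v, pos v), inj' := ?_, map_rel_iff' := ?_ },
    fun v => ⟨rfl, ?_⟩⟩
  · intro v w h
    simp only [Prod.mk.injEq] at h
    obtain ⟨hc, hpos⟩ := h
    have hw : w ∈ (G.connectedComponentMk v).supp := hc.symm
    rw [pos_eq _ ⟨v, rfl⟩, pos_eq _ ⟨w, hw⟩, Fin.val_inj] at hpos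
    exact congrArg Subtype.val ((φ _).injective hpos)
  · intro v w
    change (starUnion _).Adj (_, pos v) (_, pos w) ↔ _
    rw [starUnion_adj]
    by_cases hc : G.connectedComponentMk v = G.connectedComponentMk w
    · rw [adj_iff _ ⟨v, rfl⟩ ⟨w, hc.symm⟩]
      exact and_iff_right hc
    · exact iff_of_false (fun h => hc h.1) fun h =>
        hc (ConnectedComponent.connectedComponentMk_eq_of_adj h)
  · rw [Nat.card_congr (φ _).toEquiv, Nat.card_eq_fintype_card, Fintype.card_fin]
    exact (φ _ _).isLt

theorem IsStarForest.nonempty_embedding_Fstar {W : Type*} [Fintype W] {G : SimpleGraph W}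
    (hG : IsStarForest G) {n : ℕ} (hcard : Fintype.card W ≤ n) : Nonempty (G ↪g Fstar n) := by
  have : Fintype G.ConnectedComponent := Fintype.ofFinite _
  obtain ⟨ψ, hψ⟩ := hG.exists_embedding_starUnion
  obtain ⟨r, hr⟩ :=
    exists_embedding_fin_succ_mul_le_sum fun c : G.ConnectedComponent => Nat.card c.supp
  rw [sum_natCard_connectedComponent_supp] at hr
  have hk : Fintype.card G.ConnectedComponent ≤ n :=
    (Fintype.card_le_of_surjective G.connectedComponentMk Quot.mk_surjective).trans hcard
  let ι := r.trans (Fin.castLEEmb hk)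
  have hbound v : (ψ v).2 < n / ((ι (ψ v).1 : ℕ) + 1) + 1 := by
    rw [(hψ v).1, Nat.lt_succ_iff]
    exact ((hψ v).2.trans_le ((Nat.le_div_iff_mul_le (Nat.succ_pos _)).2
      ((mul_comm _ _).trans_le ((hr _).trans hcard)))).le
  exact ⟨(Fstar.toStarUnion n).ofCompEq ((starUnion.map ι).comp ψ)
    (fun v => ⟨ι (ψ v).1, ⟨(ψ v).2, hbound v⟩⟩) fun v => rfl⟩

theorem sum_div_succ_add_one_le (n : ℕ) :
    ((∑ i ∈ Finset.range n, (n / (i + 1) + 1) : ℕ) : ℝ) ≤ n * (Real.log n + 2) :=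
  calc ((∑ i ∈ Finset.range n, (n / (i + 1) + 1) : ℕ) : ℝ)
      ≤ ∑ i ∈ Finset.range n, ((n : ℝ) / (i + 1) + 1) := by
        push_cast
        gcongr
        exact_mod_cast Nat.cast_div_le
    _ = n * harmonic n + n := by
        simp [harmonic, Finset.sum_add_distrib, Finset.mul_sum, div_eq_mul_inv]
    _ ≤ n * (1 + Real.log n) + n := by gcongr; exact harmonic_le_one_add_log n
    _ = n * (Real.log n + 2) := by ring

theorem Fstar_universal_general (n : ℕ) :
    (∀ (W : Type) [Fintype W] (G : SimpleGraph W), IsStarForest G →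
      Fintype.card W ≤ n → Nonempty (G ↪g Fstar n)) ∧
    Fintype.card (Σ i : Fin n, Fin (n / ((i : ℕ) + 1) + 1)) =
      ∑ i ∈ Finset.range n, (n / (i + 1) + 1) ∧
    ((∑ i ∈ Finset.range n, (n / (i + 1) + 1) : ℕ) : ℝ) ≤ n * (Real.log n + 2) :=
  ⟨fun _ _ _ hG hcard => hG.nonempty_embedding_Fstar hcard,
    by simp [Fin.sum_univ_eq_sum_range (fun i => n / (i + 1) + 1)],
    sum_div_succ_add_one_le n⟩

/-- `F*` contains every star forest on at most `n` vertices as an induced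
subgraph, it has exactly `∑_{i=1}^{n} (⌊n/i⌋ + 1)` vertices, and this number is
at most `n (ln n + 2)`. -/
theorem Fstar_universal (n : ℕ) (hn : 1 ≤ n) :
    (∀ (W : Type) [Fintype W] (G : SimpleGraph W), IsStarForest G →
      Fintype.card W ≤ n → Nonempty (G ↪g Fstar n)) ∧
    Fintype.card (Σ i : Fin n, Fin (n / ((i : ℕ) + 1) + 1)) =
      ∑ i ∈ Finset.range n, (n / (i + 1) + 1) ∧
    ((∑ i ∈ Finset.range n, (n / (i + 1) + 1) : ℕ) : ℝ) ≤ n * (Real.log n + 2) :=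
  Fstar_universal_general n
end

section
/- There exists a constant c > 0 such that for every n ≥ 2, every bipartite permutation graph H that contains every star forest on at most n vertices as an induced subgraph has at least c·n·ln n vertices. -/
open SimpleGraph

/-!
View `H` as the letter graph of a word `f` over `ℕ`: positions `x < y` are adjacent iff
`f y = f x + 1`. In an induced copy of `m` disjoint stars `K_{1,d}`, the leaves after a centre `c`
carry the letter `f c + 1` and those before it `f c - 1`, so at least `k` leaves of each star
(`2k ≤ d + 1`) share a letter and a side. Two stars cannot share both: a leaf is not adjacent to
the other centre, which pins it on the far side of that centre, and the two stars would then
interleave in both orders. Hence at least `m / 2` letters occur `k` times or more. Taking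
`k = 2 ^ i`, `d = 2k` and `m ≈ n / 2 ^ (i + 1)` for all `i < log₂ n` and summing with weights
`2 ^ i`, a letter occurring `c` times is counted with total weight below `2c`, so
`n log₂ n = O(|H|)`.
-/

open Finset

section LetterGraph

variable {α : Type*} [LinearOrder α] (f : α → ℕ)

def letterGraph : SimpleGraph α where
  Adj x y := x < y ∧ f y = f x + 1 ∨ y < x ∧ f x = f y + 1
  symm := ⟨fun _ _ => Or.symm⟩
  loopless := ⟨fun x h => by rcases h with h | h <;> exact lt_irrefl x h.1⟩

variable {f}

theorem letterGraph_adj_of_lt {x y : α} (h : x < y) :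
    (letterGraph f).Adj x y ↔ f y = f x + 1 := by
  simp [letterGraph, h, lt_asymm h]

theorem lt_of_not_letterGraph_adj {x y : α} (hxy : ¬(letterGraph f).Adj x y) (hne : x ≠ y)
    (hf : f x = f y + 1) : x < y :=
  hne.lt_or_gt.resolve_right fun h => hxy (Or.inr ⟨h, hf⟩)

end LetterGraph

theorem IsBPG.exists_iso_letterGraph {V : Type*} [Fintype V] {G : SimpleGraph V} (h : IsBPG G) :
    ∃ f : Fin (Fintype.card V) → ℕ, Nonempty (letterGraph f ≃g G) := by
  obtain ⟨k, v, w, hw⟩ := h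
  refine ⟨fun i => w i, ⟨v, fun {i j} => ?_⟩⟩
  rcases lt_trichotomy i j with hij | rfl | hij
  · rw [hw i j hij, letterGraph_adj_of_lt hij]
  · simp
  · rw [G.adj_comm, hw j i hij, (letterGraph _).adj_comm, letterGraph_adj_of_lt hij]

theorem SimpleGraph.Connected.nonempty_iso_induce_supp_bot_boxProd {ι V : Type*}
    {G : SimpleGraph V} (hG : G.Connected) (c : ((⊥ : SimpleGraph ι) □ G).ConnectedComponent) :
    Nonempty ((((⊥ : SimpleGraph ι) □ G).induce c.supp) ≃g G) := by
  obtain ⟨x, rfl⟩ := c.exists_rep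
  have hsupp (y : ι × V) :
      y ∈ (((⊥ : SimpleGraph ι) □ G).connectedComponentMk x).supp ↔ y.1 = x.1 := by
    simp [ConnectedComponent.mem_supp_iff, ConnectedComponent.eq, reachable_boxProd,
      reachable_bot, hG.preconnected _ _]
  refine ⟨⟨⟨fun y => y.1.2, fun b => ⟨(x.1, b), (hsupp _).2 rfl⟩,
    fun y => Subtype.ext (Prod.ext ((hsupp _).1 y.2).symm rfl), fun _ => rfl⟩, ?_⟩⟩
  rintro ⟨y, hy⟩ ⟨z, hz⟩
  simp [boxProd_adj, ((hsupp _).1 hy).trans ((hsupp _).1 hz).symm]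

def starForest (m d : ℕ) : SimpleGraph (Fin m × Fin (d + 1)) :=
  (⊥ : SimpleGraph (Fin m)) □ _root_.starGraph d

theorem isStarForest_starForest (m d : ℕ) : IsStarForest (starForest m d) := fun c =>
  ⟨d, (connected_starGraph 0).nonempty_iso_induce_supp_bot_boxProd c⟩

theorem starForest_adj {m d : ℕ} {x y : Fin m × Fin (d + 1)} :
    (starForest m d).Adj x y ↔ x.1 = y.1 ∧ x.2 ≠ y.2 ∧ (x.2 = 0 ∨ y.2 = 0) := by
  simp [starForest, boxProd_adj, _root_.starGraph, and_comm]

section HeavyLetters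

variable {α : Type*} [Fintype α] (f : α → ℕ)

def heavyLetters (k : ℕ) : Finset ℕ := {b ∈ univ.image f | k ≤ #{p | f p = b}}

variable {f}

theorem mem_heavyLetters_of_injOn {β : Type*} {S : Finset β} {g : β → α} {b k : ℕ}
    (hg : Set.InjOn g S) (hk : 0 < k) (hS : k ≤ #S) (hb : ∀ i ∈ S, f (g i) = b) :
    b ∈ heavyLetters f k := by
  obtain ⟨i, hi⟩ := card_pos.1 (hk.trans_le hS)
  refine mem_filter.2 ⟨mem_image.2 ⟨g i, mem_univ _, hb i hi⟩, hS.trans ?_⟩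
  exact card_le_card_of_injOn g (fun j hj => by simp [hb j hj]) hg

theorem sum_range_ite_two_pow_le (c t : ℕ) :
    ∑ i ∈ range t, (if 2 ^ i ≤ c then 2 ^ i else 0) ≤ 2 * c := by
  induction t with
  | zero => simp
  | succ t ih =>
    rw [sum_range_succ]
    split_ifs with h
    · have hle :
          ∑ i ∈ range t, (if 2 ^ i ≤ c then 2 ^ i else 0) ≤ ∑ i ∈ range t, 2 ^ i :=
        sum_le_sum fun i _ => by split_ifs <;> simp
      have hgeom : ∑ i ∈ range t, 2 ^ i < 2 ^ t := by
        rw [Nat.geomSum_eq le_rfl]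
        simp
      omega
    · rw [add_zero]
      exact ih

theorem sum_two_pow_mul_card_heavyLetters_le (t : ℕ) :
    ∑ i ∈ range t, 2 ^ i * #(heavyLetters f (2 ^ i)) ≤ 2 * Fintype.card α := by
  let count (b : ℕ) : ℕ := #{p | f p = b}
  calc ∑ i ∈ range t, 2 ^ i * #(heavyLetters f (2 ^ i))
      = ∑ b ∈ univ.image f, ∑ i ∈ range t, (if 2 ^ i ≤ count b then 2 ^ i else 0) := by
        rw [sum_comm]
        refine sum_congr rfl fun i _ => ?_
        rw [heavyLetters, card_filter, mul_sum]
        simp [count]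
    _ ≤ ∑ b ∈ univ.image f, 2 * count b := sum_le_sum fun b _ => sum_range_ite_two_pow_le _ _
    _ = 2 * Fintype.card α := by rw [← mul_sum, ← card_univ, card_eq_sum_card_image f univ]

end HeavyLetters

section StarForestEmbedding

variable {α : Type*} [LinearOrder α] {f : α → ℕ} {m d : ℕ}
variable (φ : starForest m d ↪g letterGraph f)

def upLeaves (s : Fin m) : Finset (Fin (d + 1)) := {i | i ≠ 0 ∧ φ (s, 0) < φ (s, i)}

def downLeaves (s : Fin m) : Finset (Fin (d + 1)) := {i | i ≠ 0 ∧ φ (s, i) < φ (s, 0)}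

variable {φ} {s t : Fin m} {i j : Fin (d + 1)}

theorem letterGraph_adj_center_leaf (hi : i ≠ 0) : (letterGraph f).Adj (φ (s, 0)) (φ (s, i)) :=
  φ.map_adj_iff.2 (starForest_adj.2 ⟨rfl, hi.symm, Or.inl rfl⟩)

theorem not_letterGraph_adj_leaf_center (hst : s ≠ t) :
    ¬(letterGraph f).Adj (φ (s, i)) (φ (t, 0)) :=
  fun h => hst (starForest_adj.1 (φ.map_adj_iff.1 h)).1

theorem leaf_ne_center (hst : s ≠ t) : φ (s, i) ≠ φ (t, 0) :=
  fun h => hst (congrArg Prod.fst (φ.injective h))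

theorem apply_upLeaf (hi : i ∈ upLeaves φ s) : f (φ (s, i)) = f (φ (s, 0)) + 1 := by
  rw [upLeaves, mem_filter] at hi
  exact (letterGraph_adj_of_lt hi.2.2).1 (letterGraph_adj_center_leaf hi.2.1)

theorem apply_downLeaf (hi : i ∈ downLeaves φ s) : f (φ (s, 0)) = f (φ (s, i)) + 1 := by
  rw [downLeaves, mem_filter] at hi
  exact (letterGraph_adj_of_lt hi.2.2).1 (letterGraph_adj_center_leaf hi.2.1).symm

theorem le_card_upLeaves_add_card_downLeaves : d ≤ #(upLeaves φ s) + #(downLeaves φ s) := by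
  calc d = #(univ.erase (0 : Fin (d + 1))) := by simp
    _ ≤ #(upLeaves φ s ∪ downLeaves φ s) := card_le_card fun i hi => by
        have hne : φ (s, i) ≠ φ (s, 0) := fun h =>
          ne_of_mem_erase hi (by simpa using φ.injective h)
        rcases hne.lt_or_gt with h | h <;> simp [upLeaves, downLeaves, ne_of_mem_erase hi, h]
    _ ≤ _ := card_union_le _ _

theorem lt_upLeaf_of_apply_eq (hst : s ≠ t) (hj : j ∈ upLeaves φ t)
    (hf : f (φ (s, i)) = f (φ (t, j))) : φ (s, i) < φ (t, j) := by
  have hlt : φ (s, i) < φ (t, 0) :=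
    lt_of_not_letterGraph_adj (not_letterGraph_adj_leaf_center hst) (leaf_ne_center hst)
      (by rw [hf, apply_upLeaf hj])
  exact hlt.trans (mem_filter.1 hj).2.2

theorem center_lt_center_of_apply_downLeaf_eq (hst : s ≠ t) (hi : i ∈ downLeaves φ s)
    (hj : j ∈ downLeaves φ t) (hf : f (φ (s, i)) = f (φ (t, j))) : φ (t, 0) < φ (s, 0) := by
  have hlt : φ (t, 0) < φ (s, i) :=
    lt_of_not_letterGraph_adj (fun h => not_letterGraph_adj_leaf_center hst h.symm)
      (leaf_ne_center hst).symm (by rw [hf, apply_downLeaf hj])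
  exact hlt.trans (mem_filter.1 hi).2.2

variable (φ) in
def starLetter (k : ℕ) (s : Fin m) : ℕ :=
  if k ≤ #(upLeaves φ s) then f (φ (s, 0)) + 1 else f (φ (s, 0)) - 1

variable {k : ℕ}

theorem le_card_downLeaves (hd : 2 * k ≤ d + 1) (hs : ¬k ≤ #(upLeaves φ s)) :
    k ≤ #(downLeaves φ s) := by
  have := le_card_upLeaves_add_card_downLeaves (φ := φ) (s := s)
  omega

theorem apply_upLeaf_eq_starLetter (hs : k ≤ #(upLeaves φ s)) (hi : i ∈ upLeaves φ s) :
    f (φ (s, i)) = starLetter φ k s := by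
  rw [starLetter, if_pos hs, apply_upLeaf hi]

theorem apply_downLeaf_eq_starLetter (hs : ¬k ≤ #(upLeaves φ s)) (hi : i ∈ downLeaves φ s) :
    f (φ (s, i)) = starLetter φ k s := by
  rw [starLetter, if_neg hs, apply_downLeaf hi, Nat.add_sub_cancel]

theorem starLetter_mem_heavyLetters [Fintype α] (hk : 0 < k) (hd : 2 * k ≤ d + 1) :
    starLetter φ k s ∈ heavyLetters f k := by
  have hinj : Function.Injective fun i => φ (s, i) :=
    fun i j h => (Prod.ext_iff.1 (φ.injective h)).2
  by_cases hs : k ≤ #(upLeaves φ s)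
  · exact mem_heavyLetters_of_injOn hinj.injOn hk hs
      fun i => apply_upLeaf_eq_starLetter hs
  · exact mem_heavyLetters_of_injOn hinj.injOn hk (le_card_downLeaves hd hs)
      fun i => apply_downLeaf_eq_starLetter hs

theorem eq_of_starLetter_eq (hk : 0 < k) (hd : 2 * k ≤ d + 1)
    (hside : k ≤ #(upLeaves φ s) ↔ k ≤ #(upLeaves φ t))
    (hletter : starLetter φ k s = starLetter φ k t) : s = t := by
  by_contra hst
  by_cases hs : k ≤ #(upLeaves φ s)
  · have ht := hside.1 hs
    obtain ⟨i, hi⟩ := card_pos.1 (hk.trans_le hs)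
    obtain ⟨j, hj⟩ := card_pos.1 (hk.trans_le ht)
    have hf : f (φ (s, i)) = f (φ (t, j)) := by
      rw [apply_upLeaf_eq_starLetter hs hi, apply_upLeaf_eq_starLetter ht hj, hletter]
    exact lt_asymm (lt_upLeaf_of_apply_eq hst hj hf)
      (lt_upLeaf_of_apply_eq (Ne.symm hst) hi hf.symm)
  · have ht := mt hside.2 hs
    obtain ⟨i, hi⟩ := card_pos.1 (hk.trans_le (le_card_downLeaves hd hs))
    obtain ⟨j, hj⟩ := card_pos.1 (hk.trans_le (le_card_downLeaves hd ht))
    have hf : f (φ (s, i)) = f (φ (t, j)) := by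
      rw [apply_downLeaf_eq_starLetter hs hi, apply_downLeaf_eq_starLetter ht hj, hletter]
    exact lt_asymm (center_lt_center_of_apply_downLeaf_eq hst hi hj hf)
      (center_lt_center_of_apply_downLeaf_eq (Ne.symm hst) hj hi hf.symm)

theorem le_two_mul_card_heavyLetters [Fintype α] (φ : starForest m d ↪g letterGraph f)
    (hk : 0 < k) (hd : 2 * k ≤ d + 1) : m ≤ 2 * #(heavyLetters f k) :=
  calc m = #(univ : Finset (Fin m)) := by simp
    _ ≤ #((univ : Finset Bool) ×ˢ heavyLetters f k) :=
      card_le_card_of_injOn (fun s => (decide (k ≤ #(upLeaves φ s)), starLetter φ k s))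
        (fun s _ => mem_product.2 ⟨mem_univ _, starLetter_mem_heavyLetters hk hd⟩)
        fun s _ t _ h => eq_of_starLetter_eq hk hd (by simpa using (Prod.ext_iff.1 h).1)
          (Prod.ext_iff.1 h).2
    _ = 2 * #(heavyLetters f k) := by simp

end StarForestEmbedding

theorem nat_log_mul_le_of_forall_starForest_embedding {α : Type*} [LinearOrder α] [Fintype α]
    {f : α → ℕ} {n : ℕ}
    (hemb : ∀ m d, m * (d + 1) ≤ n → Nonempty (starForest m d ↪g letterGraph f)) :
    (Nat.log 2 n + 1) * n ≤ 16 * Fintype.card α := by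
  rcases Nat.eq_zero_or_pos n with rfl | hn
  · simp
  have hnN : n ≤ Fintype.card α := by
    simpa using Fintype.card_le_of_embedding (hemb n 0 (by simp)).some.toEmbedding
  set T := Nat.log 2 n
  -- `m i` disjoint stars with `2 ^ (i + 1)` leaves fit into `n` vertices
  let m (i : ℕ) : ℕ := n / (2 * 2 ^ i + 1)
  have hm (i : ℕ) : m i ≤ 2 * #(heavyLetters f (2 ^ i)) :=
    le_two_mul_card_heavyLetters (hemb _ _ (Nat.div_mul_le_self n _)).some
      (Nat.two_pow_pos i) (by omega)
  have hcover (i : ℕ) : n ≤ 3 * (2 ^ i * m i) + 3 * 2 ^ i := calc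
    n ≤ (m i + 1) * (2 * 2 ^ i + 1) :=
      ((Nat.div_lt_iff_lt_mul (Nat.succ_pos _)).1 (Nat.lt_succ_self (m i))).le
    _ ≤ (m i + 1) * (3 * 2 ^ i) :=
      Nat.mul_le_mul_left _ (by have := Nat.one_le_two_pow (n := i); omega)
    _ = 3 * (2 ^ i * m i) + 3 * 2 ^ i := by ring
  have hsum : ∑ i ∈ range T, 2 ^ i * m i ≤ 4 * Fintype.card α := calc
    _ ≤ ∑ i ∈ range T, 2 * (2 ^ i * #(heavyLetters f (2 ^ i))) :=
      sum_le_sum fun i _ => (Nat.mul_le_mul_left _ (hm i)).trans_eq (by ring)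
    _ ≤ 2 * (2 * Fintype.card α) := by
      rw [← mul_sum]; exact Nat.mul_le_mul_left 2 (sum_two_pow_mul_card_heavyLetters_le T)
    _ = _ := by ring
  have hgeom : ∑ i ∈ range T, 2 ^ i ≤ n := by
    rw [Nat.geomSum_eq le_rfl]
    simpa using (Nat.sub_le _ _).trans (Nat.pow_log_le_self 2 hn.ne')
  calc (T + 1) * n = ∑ _i ∈ range T, n + n := by simp [add_mul]
    _ ≤ ∑ i ∈ range T, (3 * (2 ^ i * m i) + 3 * 2 ^ i) + n := by gcongr with i; exact hcover i
    _ ≤ 16 * Fintype.card α := by rw [sum_add_distrib, ← mul_sum, ← mul_sum]; omega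

theorem Real.log_natCast_le_natLog_two_add_one (n : ℕ) : Real.log n ≤ Nat.log 2 n + 1 := by
  rcases Nat.eq_zero_or_pos n with rfl | hn
  · simp
  calc Real.log n ≤ Real.log (2 ^ (Nat.log 2 n + 1)) := by
        gcongr
        exact_mod_cast (Nat.lt_pow_succ_log_self one_lt_two n).le
    _ = (Nat.log 2 n + 1) * Real.log 2 := by rw [Real.log_pow]; push_cast; ring
    _ ≤ Nat.log 2 n + 1 := by
      have := Real.log_two_lt_d9
      nlinarith

/-- Every bipartite permutation graph containing all star forests on at most
`n ≥ 2` vertices as induced subgraphs has at least `c · n · ln n` vertices. -/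
theorem universal_star_forest_lower_bound :
    ∃ c : ℝ, 0 < c ∧ ∀ n : ℕ, 2 ≤ n →
      ∀ (W : Type) [Fintype W] (H : SimpleGraph W), IsBPG H →
        (∀ (U : Type) [Fintype U] (G : SimpleGraph U), IsStarForest G →
          Fintype.card U ≤ n → Nonempty (G ↪g H)) →
        c * n * Real.log n ≤ Fintype.card W := by
  refine ⟨1 / 16, by norm_num, fun n _ W _ H hH huniv => ?_⟩
  obtain ⟨f, ⟨e⟩⟩ := hH.exists_iso_letterGraph
  have hemb (m d : ℕ) (h : m * (d + 1) ≤ n) : Nonempty (starForest m d ↪g letterGraph f) :=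
    (huniv _ _ (isStarForest_starForest m d) (by simpa using h)).map
      fun φ => e.symm.toEmbedding.comp φ
  have hcount : ((Nat.log 2 n + 1) * n : ℕ) ≤ (16 * Fintype.card W : ℝ) := by
    exact_mod_cast (nat_log_mul_le_of_forall_starForest_embedding hemb).trans_eq (by simp)
  calc 1 / 16 * n * Real.log n ≤ 1 / 16 * n * (Nat.log 2 n + 1) := by
        gcongr; exact Real.log_natCast_le_natLog_two_add_one n
    _ ≤ Fintype.card W := by push_cast at hcount; linarith
end

section
/- For all integers k ≥ 1 and n ≥ 1, every star forest on at most n vertices that contains no induced kK_{1,k} (the disjoint union of k copies of the star K_{1,k}) is isomorphic to an induced subgraph of the disjoint union of k − 1 copies of K_{1,n} and n copies of K_{1,k−1}. -/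
open SimpleGraph

/-- The disjoint union of `k` copies of the star `K_{1,k}`. -/
def kClaws (k : ℕ) : SimpleGraph (Fin k × Fin (k + 1)) :=
  SimpleGraph.fromRel (fun x y => x.1 = y.1 ∧ x.2 = 0)

/-- The disjoint union of `k - 1` copies of `K_{1,n}` (the left summand)
and `n` copies of `K_{1,k-1}` (the right summand). -/
def SFtarget (k n : ℕ) : SimpleGraph ((Fin (k - 1) × Fin (n + 1)) ⊕ (Fin n × Fin k)) :=
  SimpleGraph.fromRel (fun x y =>
    match x, y with
    | Sum.inl a, Sum.inl b => a.1 = b.1 ∧ (a.2 : ℕ) = 0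
    | Sum.inr a, Sum.inr b => a.1 = b.1 ∧ (a.2 : ℕ) = 0
    | _, _ => False)

/-!
Record a star forest by two labels per vertex: its connected component, and its position in
that star, `0` being the centre. Then two vertices are adjacent iff they are distinct, carry the
same component label and one of them has position `0`; `kK_{1,k}` and the target graph carry
the same kind of labelling, and any map that sends components injectively to components and
preserves positions is an induced embedding. A star forest without induced `kK_{1,k}` has at
most `k - 1` components with more than `k` leaves; these go to the copies of `K_{1,n}`. The
remaining components have at most `k` vertices, and there are at most `n` of them, so they fit
into the copies of `K_{1,k-1}`.
-/

namespace SimpleGraph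

variable {V U ι κ : Type*} {G : SimpleGraph V} {H : SimpleGraph U}

structure IsStarLabeling (G : SimpleGraph V) (β : V → ι) (ℓ : V → ℕ) : Prop where
  injective : Function.Injective fun v => (β v, ℓ v)
  adj_iff {v w : V} : G.Adj v w ↔ v ≠ w ∧ β v = β w ∧ (ℓ v = 0 ∨ ℓ w = 0)

theorem IsStarLabeling.nonempty_embedding {β : V → ι} {ℓ : V → ℕ} {β' : U → κ} {ℓ' : U → ℕ}
    (hG : G.IsStarLabeling β ℓ) (hH : H.IsStarLabeling β' ℓ') (σ : ι → κ)
    (hσ : Function.Injective σ) (hrealize : ∀ v, ∃ x, β' x = σ (β v) ∧ ℓ' x = ℓ v) :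
    Nonempty (G ↪g H) := by
  choose f hfβ hfℓ using hrealize
  have hf : Function.Injective f := fun v w h => hG.injective <|
    Prod.ext (hσ <| by rw [← hfβ, ← hfβ, h]) (show ℓ v = ℓ w by rw [← hfℓ, ← hfℓ, h])
  refine ⟨⟨⟨f, hf⟩, fun {v w} => ?_⟩⟩
  simp only [Function.Embedding.coeFn_mk, hH.adj_iff, hG.adj_iff, hfβ, hfℓ, hσ.eq_iff, hf.ne_iff]

end SimpleGraph

open SimpleGraph

theorem starGraph_adj {p : ℕ} {a b : Fin (p + 1)} :
    (_root_.starGraph p).Adj a b ↔ a ≠ b ∧ (a = 0 ∨ b = 0) := by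
  simp [_root_.starGraph]

theorem kClaws_isStarLabeling (k : ℕ) :
    (kClaws k).IsStarLabeling Prod.fst fun x => (x.2 : ℕ) where
  injective x y h := by
    simp only [Prod.mk.injEq] at h
    exact Prod.ext h.1 (Fin.ext h.2)
  adj_iff {x y} := by
    simp only [kClaws, fromRel_adj, ← Fin.val_eq_zero_iff]
    grind

theorem SFtarget_isStarLabeling (k n : ℕ) :
    (SFtarget k n).IsStarLabeling (Sum.map Prod.fst Prod.fst)
      (Sum.elim (fun a => (a.2 : ℕ)) fun b => (b.2 : ℕ)) where
  injective x y h := by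
    rcases x with ⟨i, a⟩ | ⟨i, a⟩ <;> rcases y with ⟨j, b⟩ | ⟨j, b⟩ <;>
      simp_all [Fin.ext_iff]
  adj_iff {x y} := by
    rcases x with ⟨i, a⟩ | ⟨i, a⟩ <;> rcases y with ⟨j, b⟩ | ⟨j, b⟩ <;>
      simp only [SFtarget, fromRel_adj, ne_eq, Sum.inl.injEq, Sum.inr.injEq, reduceCtorEq,
        Sum.map_inl, Sum.map_inr, Sum.elim_inl, Sum.elim_inr, Prod.ext_iff, Fin.ext_iff] <;> grind

theorem IsStarForest.exists_isStarLabeling {V : Type*} {G : SimpleGraph V} (hG : IsStarForest G) :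
    ∃ ℓ : V → ℕ, G.IsStarLabeling G.connectedComponentMk ℓ ∧
      (∀ v, ℓ v < Nat.card (G.connectedComponentMk v).supp) ∧
      ∀ c a, a < Nat.card c.supp → ∃ v, G.connectedComponentMk v = c ∧ ℓ v = a := by
  choose p he using hG
  let e c := (he c).some
  let ℓ v : ℕ := e (G.connectedComponentMk v) ⟨v, rfl⟩
  have hℓ (c) (v) (hv : v ∈ c.supp) : ℓ v = e c ⟨v, hv⟩ := by
    subst hv
    rfl
  have hcard (c) : Nat.card c.supp = p c + 1 := by
    simp [Nat.card_congr (e c).toEquiv]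
  refine ⟨ℓ, ⟨fun v w h => ?_, fun {v w} => ?_⟩, fun v => ?_, fun c a ha => ?_⟩
  · simp only [Prod.mk.injEq] at h
    have hv : v ∈ (G.connectedComponentMk w).supp := h.1
    have := (e _).injective (Fin.ext ((hℓ _ v hv).symm.trans (h.2.trans (hℓ _ w rfl))))
    exact congrArg Subtype.val this
  · by_cases hvw : G.connectedComponentMk v = G.connectedComponentMk w
    · have hv : v ∈ (G.connectedComponentMk w).supp := hvw
      change (G.induce _).Adj ⟨v, hv⟩ ⟨w, rfl⟩ ↔ _
      rw [← (e _).map_adj_iff, _root_.starGraph_adj, hℓ _ v hv, hℓ _ w rfl, Fin.val_eq_zero_iff,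
        Fin.val_eq_zero_iff, (e _).injective.ne_iff]
      simp [hvw, Subtype.ext_iff]
    · simp only [hvw, false_and, and_false, iff_false]
      exact fun h => hvw (ConnectedComponent.connectedComponentMk_eq_of_adj h)
  · rw [hcard]
    exact (e _ _).isLt
  · refine ⟨(e c).symm ⟨a, hcard c ▸ ha⟩, ((e c).symm _).2, ?_⟩
    rw [hℓ c _ ((e c).symm _).2]
    simp

namespace SimpleGraph.IsStarLabeling

variable {V ι : Type*} [Finite ι] {G : SimpleGraph V} {β : V → ι} {ℓ : V → ℕ}

theorem card_lt_of_kClaws_free {k : ℕ} (hG : G.IsStarLabeling β ℓ) (s : ι → ℕ)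
    (hrealize : ∀ i a, a < s i → ∃ v, β v = i ∧ ℓ v = a) (hfree : ¬ Nonempty (kClaws k ↪g G)) :
    Nat.card {i // k < s i} < k := by
  by_contra! hk
  let C : Fin k ↪ {i // k < s i} := (Fin.castLEEmb hk).trans (Finite.equivFin _).symm.toEmbedding
  refine hfree <| (kClaws_isStarLabeling k).nonempty_embedding hG (fun i => (C i).1)
    (Subtype.val_injective.comp C.injective) fun x => hrealize _ _ ?_
  have := (C x.1).2
  omega

theorem nonempty_embedding_SFtarget {k n : ℕ} (hG : G.IsStarLabeling β ℓ) (s : ι → ℕ)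
    (hbound : ∀ v, ℓ v < s (β v)) (hs : ∀ i, s i ≤ n + 1) (hbig : Nat.card {i // k < s i} ≤ k - 1)
    (hι : Nat.card ι ≤ n) : Nonempty (G ↪g SFtarget k n) := by
  classical
  let big : {i // k < s i} ↪ Fin (k - 1) :=
    (Finite.equivFin _).toEmbedding.trans (Fin.castLEEmb hbig)
  let small : {i // ¬ k < s i} ↪ Fin n :=
    (Finite.equivFin _).toEmbedding.trans (Fin.castLEEmb ((Finite.card_subtype_le _).trans hι))
  refine hG.nonempty_embedding (SFtarget_isStarLabeling k n)
    (Sum.map big small ∘ (Equiv.sumCompl _).symm)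
    ((Sum.map_injective.2 ⟨big.injective, small.injective⟩).comp (Equiv.injective _)) fun v => ?_
  by_cases h : k < s (β v)
  · refine ⟨.inl (big ⟨_, h⟩, ⟨ℓ v, (hbound v).trans_le (hs _)⟩), ?_, rfl⟩
    rw [Function.comp_apply, Equiv.sumCompl_symm_apply_of_pos (p := fun i => k < s i) h]
    rfl
  · refine ⟨.inr (small ⟨_, h⟩, ⟨ℓ v, by have := hbound v; omega⟩), ?_, rfl⟩
    rw [Function.comp_apply, Equiv.sumCompl_symm_apply_of_neg (p := fun i => k < s i) h]
    rfl

end SimpleGraph.IsStarLabeling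

theorem kclaw_free_star_forest_embeds_general (k n : ℕ)
    (W : Type) [Fintype W] (G : SimpleGraph W) (hG : IsStarForest G)
    (hcard : Fintype.card W ≤ n) (hfree : ¬ Nonempty (kClaws k ↪g G)) :
    Nonempty (G ↪g SFtarget k n) := by
  obtain ⟨ℓ, hℓ, hbound, hrealize⟩ := hG.exists_isStarLabeling
  rw [← Nat.card_eq_fintype_card] at hcard
  have hbig := hℓ.card_lt_of_kClaws_free (fun c => Nat.card c.supp) hrealize hfree
  refine hℓ.nonempty_embedding_SFtarget (fun c => Nat.card c.supp) hbound (fun c => ?_) (by omega)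
    ((Nat.card_le_card_of_surjective _ fun c => c.exists_rep).trans hcard)
  have : Nat.card c.supp ≤ Nat.card W := Finite.card_subtype_le _
  omega

/-- Every star forest on at most `n` vertices with no induced `kK_{1,k}` is an
induced subgraph of `(k-1)·K_{1,n} + n·K_{1,k-1}`. -/
theorem kclaw_free_star_forest_embeds (k n : ℕ) (hk : 1 ≤ k) (hn : 1 ≤ n)
    (W : Type) [Fintype W] (G : SimpleGraph W) (hG : IsStarForest G)
    (hcard : Fintype.card W ≤ n) (hfree : ¬ Nonempty (kClaws k ↪g G)) :
    Nonempty (G ↪g SFtarget k n) :=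
  kclaw_free_star_forest_embeds_general k n W G hG hcard hfree
end

section
/- For every n ≥ 2, applying pivots successively to the edges a_2b_2, a_3b_3, …, a_{n−1}b_{n−1} (in this order) of the chain graph Z_n yields a graph isomorphic to the path P_{2n} on 2n vertices. -/
open SimpleGraph

/-- The chain graph `Z_n`: parts `a_1, …, a_n` (left) and `b_1, …, b_n` (right),
with `a_i` adjacent to `b_j` iff `i ≤ j`. -/
def Zgraph (n : ℕ) : SimpleGraph (Fin n ⊕ Fin n) :=
  SimpleGraph.fromRel (fun x y => ∃ i j : Fin n, x = Sum.inl i ∧ y = Sum.inr j ∧ i ≤ j)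

/-- The graph obtained from `G` by pivoting the (u,v)-pair: the adjacency of every
pair `(x, y)` with `x ∈ N(u)∖{v}` and `y ∈ N(v)∖{u}` (in either order) is
complemented, all other adjacencies are unchanged. -/
def pivot {V : Type*} (G : SimpleGraph V) (u v : V) : SimpleGraph V where
  Adj x y := x ≠ y ∧ ¬ (G.Adj x y ↔
    ((G.Adj u x ∧ x ≠ v ∧ G.Adj v y ∧ y ≠ u) ∨ (G.Adj u y ∧ y ≠ v ∧ G.Adj v x ∧ x ≠ u)))
  symm := by
    constructor
    intro x y hxy
    obtain ⟨h1, h2⟩ := hxy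
    refine ⟨h1.symm, ?_⟩
    rw [G.adj_comm y x]
    tauto
  loopless := by
    constructor
    intro x hx
    exact hx.1 rfl

/-!
After `k` of the pivots the graph is still bipartite between the `a`'s and the `b`'s (indexed
from `0` below): `a_i` is adjacent to `b_i` and `b_{i+1}` for `i < k`, and to every `b_j` with
`j ≥ i` for `i ≥ k`. Indeed, in this graph `N(a_{k+1}) ∖ {b_{k+1}} = {b_j | j ≥ k + 2}` and
`N(b_{k+1}) ∖ {a_{k+1}} = {a_k}`, so the next pivot only cuts `a_k` from `b_{k+2}, b_{k+3}, …`.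
After `n - 2` pivots every `a_i` is adjacent exactly to `b_i` and `b_{i+1}`, which is the path
`b_0 a_0 b_1 a_1 ⋯ b_{n-1} a_{n-1}`.
-/

def bipartiteOf {α β : Type*} (r : α → β → Prop) : SimpleGraph (α ⊕ β) :=
  fromRel fun x y => ∃ i j, x = Sum.inl i ∧ y = Sum.inr j ∧ r i j

section bipartiteOf

variable {α β : Type*} (r : α → β → Prop)

@[simp]
lemma bipartiteOf_adj_inl_inr (i : α) (j : β) :
    (bipartiteOf r).Adj (Sum.inl i) (Sum.inr j) ↔ r i j := by
  simp [bipartiteOf]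

@[simp]
lemma bipartiteOf_adj_inr_inl (i : α) (j : β) :
    (bipartiteOf r).Adj (Sum.inr j) (Sum.inl i) ↔ r i j := by
  simp [bipartiteOf]

@[simp]
lemma not_bipartiteOf_adj_inl_inl (i i' : α) : ¬ (bipartiteOf r).Adj (Sum.inl i) (Sum.inl i') := by
  simp [bipartiteOf]

@[simp]
lemma not_bipartiteOf_adj_inr_inr (j j' : β) : ¬ (bipartiteOf r).Adj (Sum.inr j) (Sum.inr j') := by
  simp [bipartiteOf]

lemma pivot_bipartiteOf (p : α) (q : β) :
    pivot (bipartiteOf r) (Sum.inl p) (Sum.inr q) =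
      bipartiteOf fun i j => ¬ (r i j ↔ r i q ∧ i ≠ p ∧ r p j ∧ j ≠ q) := by
  ext x y
  rcases x with i | j <;> rcases y with i' | j' <;>
    simp only [pivot, ne_eq, Sum.inl.injEq, Sum.inr.injEq, reduceCtorEq, bipartiteOf_adj_inl_inr,
      bipartiteOf_adj_inr_inl, not_bipartiteOf_adj_inl_inl, not_bipartiteOf_adj_inr_inr,
      not_false_eq_true, not_true_eq_false, true_and, false_and, and_true, and_false, and_self,
      false_or, or_false, or_self] <;>
    tauto

end bipartiteOf

lemma Zgraph_eq_bipartiteOf (n : ℕ) : Zgraph n = bipartiteOf fun i j : Fin n => i ≤ j := rfl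

/-- `Z_n` after pivoting at `a_1 b_1, …, a_k b_k`, indices counted from `0`. -/
def pivotStage (n k : ℕ) : SimpleGraph (Fin n ⊕ Fin n) :=
  bipartiteOf fun i j =>
    (i.val < k ∧ (j.val = i.val ∨ j.val = i.val + 1)) ∨ (k ≤ i.val ∧ i.val ≤ j.val)

lemma pivotStage_zero (n : ℕ) : pivotStage n 0 = Zgraph n := by
  rw [pivotStage, Zgraph_eq_bipartiteOf]
  congr 1
  funext i j
  simp only [eq_iff_iff, Fin.le_def]
  omega

lemma pivot_pivotStage {n k : ℕ} (hk : k + 1 < n) :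
    pivot (pivotStage n k) (Sum.inl ⟨k + 1, hk⟩) (Sum.inr ⟨k + 1, hk⟩) = pivotStage n (k + 1) := by
  rw [pivotStage, pivot_bipartiteOf, pivotStage]
  congr 1
  funext i j
  simp only [ne_eq, Fin.ext_iff, eq_iff_iff]
  omega

lemma foldl_pivot_Zgraph {n m : ℕ} (hn : 0 < n) (hm : m ≤ n - 2) :
    (List.range m).foldl
        (fun H i => pivot H (Sum.inl (⟨(i + 1) % n, Nat.mod_lt _ hn⟩ : Fin n))
          (Sum.inr (⟨(i + 1) % n, Nat.mod_lt _ hn⟩ : Fin n)))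
        (Zgraph n) = pivotStage n m := by
  induction m with
  | zero => exact (pivotStage_zero n).symm
  | succ k ih =>
    have hk : k + 1 < n := by omega
    have hidx : (⟨(k + 1) % n, Nat.mod_lt _ hn⟩ : Fin n) = ⟨k + 1, hk⟩ :=
      Fin.ext (Nat.mod_eq_of_lt hk)
    rw [List.range_succ, List.foldl_append, ih (by omega)]
    simp only [List.foldl_cons, List.foldl_nil, hidx]
    exact pivot_pivotStage hk

lemma pivotStage_sub_two (n : ℕ) :
    pivotStage n (n - 2) = bipartiteOf fun i j : Fin n => j.val = i.val ∨ j.val = i.val + 1 := by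
  rw [pivotStage]
  congr 1
  funext i j
  have := i.isLt
  have := j.isLt
  simp only [eq_iff_iff]
  omega

def sumFinEquivFinTwoMul (n : ℕ) : Fin n ⊕ Fin n ≃ Fin (2 * n) where
  toFun
    | Sum.inl i => ⟨2 * i.val + 1, by omega⟩
    | Sum.inr j => ⟨2 * j.val, by omega⟩
  invFun k := if k.val % 2 = 0 then Sum.inr ⟨k.val / 2, by omega⟩ else Sum.inl ⟨k.val / 2, by omega⟩
  left_inv x := by
    rcases x with i | j
    · simp only [show ¬ (2 * i.val + 1) % 2 = 0 by omega, if_false, Sum.inl.injEq]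
      exact Fin.ext (by simp only; omega)
    · simp only [show (2 * j.val) % 2 = 0 by omega, if_true, Sum.inr.injEq]
      exact Fin.ext (by simp only; omega)
  right_inv k := by
    by_cases h : k.val % 2 = 0
    · simp only [if_pos h]
      exact Fin.ext (by simp only; omega)
    · simp only [if_neg h]
      exact Fin.ext (by simp only; omega)

def bipartiteOfSuccIsoPathGraph (n : ℕ) :
    bipartiteOf (fun i j : Fin n => j.val = i.val ∨ j.val = i.val + 1) ≃g pathGraph (2 * n) where
  toEquiv := sumFinEquivFinTwoMul n
  map_rel_iff' {x y} := by
    rcases x with i | i <;> rcases y with j | j <;>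
      simp only [sumFinEquivFinTwoMul, Equiv.coe_fn_mk, pathGraph_adj, bipartiteOf_adj_inl_inr,
        bipartiteOf_adj_inr_inl, not_bipartiteOf_adj_inl_inl, not_bipartiteOf_adj_inr_inr,
        iff_false] <;>
      omega

/-- Pivoting `Z_n` successively at the edges `a_2 b_2, a_3 b_3, …, a_{n-1} b_{n-1}`
yields the path `P_{2n}`. -/
theorem Zgraph_pivots_to_path (n : ℕ) (hn : 2 ≤ n) :
    Nonempty
      ((List.range (n - 2)).foldl
        (fun H i =>
          pivot H (Sum.inl (⟨(i + 1) % n, Nat.mod_lt _ (by omega)⟩ : Fin n))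
                  (Sum.inr (⟨(i + 1) % n, Nat.mod_lt _ (by omega)⟩ : Fin n)))
        (Zgraph n)
      ≃g SimpleGraph.pathGraph (2 * n)) := by
  rw [foldl_pivot_Zgraph (by omega) le_rfl, pivotStage_sub_two]
  exact ⟨bipartiteOfSuccIsoPathGraph n⟩
end

section
/- For every n ≥ 1, the graph H_{n,n} is isomorphic to the letter graph of the word of length n² obtained by concatenating n copies of 1 2 ⋯ n, with decoder {(s, s+1) : 1 ≤ s ≤ n − 1}: explicitly, H_{n,n} is isomorphic to the graph on positions {1, …, n²} (where the letter at position p is ((p − 1) mod n) + 1) in which positions p < p' are adjacent if and only if the letter at p' equals the letter at p plus 1. In particular, H_{n,n} is a bipartite permutation graph. -/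
open SimpleGraph

/-- The universal bipartite permutation graph `H_{n,n}` on the grid
`Fin n × Fin n`: `(r, c)` and `(r', c')` are adjacent iff `r' = r + 1` and
`c' ≤ c`, or symmetrically. -/
def Hnn (n : ℕ) : SimpleGraph (Fin n × Fin n) :=
  SimpleGraph.fromRel (fun x y => (y.1 : ℕ) = (x.1 : ℕ) + 1 ∧ (y.2 : ℕ) ≤ (x.2 : ℕ))

/-- The letter graph of the concatenation of `n` copies of the word `1 2 ⋯ n`
with decoder `{(s, s+1)}`: the letter at (0-indexed) position `p` is `p % n`,
and positions `p < q` are adjacent iff `q % n = p % n + 1`. -/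
def wordGraph (n : ℕ) : SimpleGraph (Fin (n ^ 2)) :=
  SimpleGraph.fromRel (fun p q => (p : ℕ) < (q : ℕ) ∧ (q : ℕ) % n = (p : ℕ) % n + 1)

lemma BPG.pm {n r : ℕ} (c : ℕ) (hr : r < n) : ((n - 1 - c) * n + r) % n = r := by
  rw [Nat.add_comm, Nat.add_mul_mod_self_right, Nat.mod_eq_of_lt hr]

lemma BPG.pd {n r : ℕ} (c : ℕ) (hr : r < n) : ((n - 1 - c) * n + r) / n = n - 1 - c := by
  rw [Nat.add_comm, Nat.add_mul_div_right _ _ (by omega : 0 < n),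
    Nat.div_eq_of_lt hr, Nat.zero_add]

lemma BPG.bound {n r c : ℕ} (hr : r < n) (hc : c < n) : (n - 1 - c) * n + r < n ^ 2 := by
  obtain ⟨m, rfl⟩ : ∃ m, n = m + 1 := ⟨n - 1, by omega⟩
  have h1 : (m + 1 - 1 - c) * (m + 1) ≤ m * (m + 1) :=
    Nat.mul_le_mul_right _ (by omega)
  have h2 : m * (m + 1) + (m + 1) = (m + 1) ^ 2 := by ring
  omega

lemma BPG.aux {n r c r' c' : ℕ} (hr : r < n) (hc : c < n) (hr' : r' < n) (hc' : c' < n) :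
    ((n - 1 - c) * n + r < (n - 1 - c') * n + r' ∧ r' = r + 1) ↔ (r' = r + 1 ∧ c' ≤ c) := by
  constructor
  · rintro ⟨hlt, rfl⟩
    refine ⟨rfl, ?_⟩
    by_contra h
    push_neg at h
    have h1 : n - 1 - c' + 1 ≤ n - 1 - c := by omega
    have h2 : (n - 1 - c' + 1) * n ≤ (n - 1 - c) * n := Nat.mul_le_mul_right n h1
    have h3 : (n - 1 - c' + 1) * n = (n - 1 - c') * n + n := by ring
    omega
  · rintro ⟨rfl, hle⟩
    refine ⟨?_, rfl⟩
    have h1 : n - 1 - c ≤ n - 1 - c' := by omega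
    have h2 : (n - 1 - c) * n ≤ (n - 1 - c') * n := Nat.mul_le_mul_right n h1
    omega

def BPG.gridEquiv (n : ℕ) (hn : 1 ≤ n) : (Fin n × Fin n) ≃ Fin (n ^ 2) where
  toFun x := ⟨(n - 1 - (x.2 : ℕ)) * n + (x.1 : ℕ), BPG.bound x.1.2 x.2.2⟩
  invFun p := (⟨(p : ℕ) % n, Nat.mod_lt _ hn⟩,
    ⟨n - 1 - (p : ℕ) / n, by have := Nat.sub_le (n - 1) ((p : ℕ) / n); omega⟩)
  left_inv := by
    rintro ⟨r, c⟩
    refine Prod.ext (Fin.ext ?_) (Fin.ext ?_)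
    · exact BPG.pm (c : ℕ) r.2
    · show n - 1 - ((n - 1 - (c : ℕ)) * n + (r : ℕ)) / n = (c : ℕ)
      rw [BPG.pd (c : ℕ) r.2]
      have := c.2
      omega
  right_inv := by
    rintro ⟨p, hp⟩
    apply Fin.ext
    show (n - 1 - (n - 1 - p / n)) * n + p % n = p
    have hnn : n ^ 2 = n * n := sq n
    have hq : p / n < n := Nat.div_lt_of_lt_mul (by omega)
    have h1 : n - 1 - (n - 1 - p / n) = p / n := by
      generalize p / n = q at hq ⊢
      omega
    rw [h1, Nat.mul_comm]
    exact Nat.div_add_mod p n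

def BPG.iso (n : ℕ) (hn : 1 ≤ n) : Hnn n ≃g wordGraph n where
  toEquiv := BPG.gridEquiv n hn
  map_rel_iff' := by
    rintro ⟨⟨r, hr⟩, ⟨c, hc⟩⟩ ⟨⟨r', hr'⟩, ⟨c', hc'⟩⟩
    simp only [Hnn, wordGraph, BPG.gridEquiv, Equiv.coe_fn_mk, fromRel_adj, ne_eq,
      Fin.mk.injEq, Prod.mk.injEq]
    rw [BPG.pm c hr, BPG.pm c' hr']
    constructor
    · rintro ⟨hne, h | h⟩
      · refine ⟨?_, Or.inl ((BPG.aux hr hc hr' hc').mp ⟨h.1, h.2⟩)⟩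
        rintro ⟨rfl, rfl⟩; omega
      · refine ⟨?_, Or.inr ((BPG.aux hr' hc' hr hc).mp ⟨h.1, h.2⟩)⟩
        rintro ⟨rfl, rfl⟩; omega
    · rintro ⟨hne, h | h⟩
      · have := (BPG.aux hr hc hr' hc').mpr h
        exact ⟨by omega, Or.inl ⟨this.1, this.2⟩⟩
      · have := (BPG.aux hr' hc' hr hc).mpr h
        exact ⟨by omega, Or.inr ⟨this.1, this.2⟩⟩

/-- `H_{n,n}` is isomorphic to the letter graph of `(1 2 ⋯ n)^n` with the path
decoder; in particular it is a bipartite permutation graph. -/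
theorem Hnn_is_letter_graph (n : ℕ) (hn : 1 ≤ n) :
    Nonempty (Hnn n ≃g wordGraph n) ∧ IsBPG (Hnn n) := by
  refine ⟨⟨BPG.iso n hn⟩, ?_⟩
  have hcard : Fintype.card (Fin n × Fin n) = n ^ 2 := by
    simp [Fintype.card_prod, sq]
  refine ⟨n, (finCongr hcard).trans (BPG.gridEquiv n hn).symm,
    fun i => ⟨(i : ℕ) % n, Nat.mod_lt _ hn⟩, fun i j hij => ?_⟩
  have hij' : (i : ℕ) < (j : ℕ) := hij
  have hadj : (Hnn n).Adj ((BPG.gridEquiv n hn).symm (finCongr hcard i))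
      ((BPG.gridEquiv n hn).symm (finCongr hcard j)) ↔
      (wordGraph n).Adj (finCongr hcard i) (finCongr hcard j) := by
    rw [← (BPG.iso n hn).map_rel_iff]
    have h1 : (BPG.iso n hn) ((BPG.gridEquiv n hn).symm (finCongr hcard i)) =
        finCongr hcard i := Equiv.apply_symm_apply (BPG.gridEquiv n hn) (finCongr hcard i)
    have h2 : (BPG.iso n hn) ((BPG.gridEquiv n hn).symm (finCongr hcard j)) =
        finCongr hcard j := Equiv.apply_symm_apply (BPG.gridEquiv n hn) (finCongr hcard j)
    rw [h1, h2]
  simp only [Equiv.trans_apply]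
  rw [hadj]
  simp only [wordGraph, fromRel_adj, finCongr_apply, Fin.coe_cast, ne_eq]
  constructor
  · rintro ⟨-, h | h⟩
    · exact h.2
    · omega
  · intro h
    refine ⟨fun he => ?_, Or.inl ⟨hij', h⟩⟩
    have hv : (i : ℕ) = (j : ℕ) := by
      have := congrArg Fin.val he
      simpa using this
    omega
end

section
/- A graph G on N vertices is a chain graph (i.e., bipartite with no induced 2K_2) if and only if there exist an enumeration v_1, …, v_N of its vertices and a map w : {1, …, N} → {1, 2} such that for all 1 ≤ i < j ≤ N, v_i and v_j are adjacent if and only if w(i) = 1 and w(j) = 2. -/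
/-!
Two vertices of the same colour in a `2K₂`-free 2-coloured graph have nested neighbourhoods:
neighbours `b ∈ N(a) \ N(a')` and `b' ∈ N(a') \ N(a)` would span an induced `2K₂`. Hence either
some vertex of colour 1 is isolated, or a vertex of colour 0 of maximum degree is adjacent to
every vertex of colour 1. Either vertex can head the word, and induction orders the rest.

Conversely, `i < j ∧ w i = 0 ∧ w j = 1` is a Ferrers relation: of two related pairs, the one whose
`0` comes first is also related to the `1` of the other, so no two edges of a letter graph span an
induced `2K₂`; and `w` itself is a 2-colouring.
-/

open SimpleGraph

/-- The disjoint union of two edges. -/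
def twoK2 : SimpleGraph (Fin 2 × Fin 2) :=
  SimpleGraph.fromRel (fun x y => x.1 = y.1)

theorem twoK2_adj {p q : Fin 2 × Fin 2} : twoK2.Adj p q ↔ p ≠ q ∧ p.1 = q.1 := by
  simp [twoK2, eq_comm]

namespace SimpleGraph

variable {V : Type*} {G : SimpleGraph V}

theorem nonempty_twoK2_embedding_of_adj {a b a' b' : V}
    (hab : G.Adj a b) (ha'b' : G.Adj a' b') (haa' : ¬ G.Adj a a') (hab' : ¬ G.Adj a b')
    (hba' : ¬ G.Adj b a') (hbb' : ¬ G.Adj b b') : Nonempty (twoK2 ↪g G) := by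
  have := hab.ne; have := ha'b'.ne
  have := G.ne_of_adj_of_not_adj ha'b' hab'
  have := G.ne_of_adj_of_not_adj hab (hbb' ·.symm)
  have := G.ne_of_adj_of_not_adj hab.symm (haa' ·.symm)
  have := G.ne_of_adj_of_not_adj hab.symm (hab' ·.symm)
  refine ⟨⟨⟨fun p => ![![a, b], ![a', b']] p.1 p.2, ?_⟩, ?_⟩⟩
  · intro p q hpq
    fin_cases p <;> fin_cases q <;> simp_all
  · intro p q
    fin_cases p <;> fin_cases q <;> simp_all [twoK2_adj, G.adj_comm]

theorem neighborSet_subset_or_subset_of_twoK2_free (hfree : ¬ Nonempty (twoK2 ↪g G))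
    (C : G.Coloring (Fin 2)) {a a' : V} (hC : C a = C a') :
    G.neighborSet a ⊆ G.neighborSet a' ∨ G.neighborSet a' ⊆ G.neighborSet a := by
  rw [or_iff_not_imp_left, Set.not_subset]
  rintro ⟨b, hab, hnb⟩ b' ha'b'
  by_contra hnb'
  rw [mem_neighborSet] at *
  have hCb : C b = C b' := by
    have := C.valid hab; have := C.valid ha'b'; omega
  exact hfree (nonempty_twoK2_embedding_of_adj hab ha'b' (fun h => C.valid h hC) hnb' (hnb ·.symm)
    (fun h => C.valid h hCb))

theorem adj_of_adj_of_degree_le [Fintype V] [DecidableRel G.Adj]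
    (hfree : ¬ Nonempty (twoK2 ↪g G)) (C : G.Coloring (Fin 2)) {a a' y : V} (hC : C a = C a')
    (hdeg : G.degree a' ≤ G.degree a) (hy : G.Adj a' y) : G.Adj a y := by
  rcases neighborSet_subset_or_subset_of_twoK2_free hfree C hC with h | h
  · have : G.neighborFinset a = G.neighborFinset a' :=
      Finset.eq_of_subset_of_card_le (fun z => by simpa using @h z) (by simpa using hdeg)
    simpa [← mem_neighborFinset, this] using hy
  · exact h hy

theorem exists_adj_iff_of_twoK2_free [Fintype V] [Nonempty V] (hfree : ¬ Nonempty (twoK2 ↪g G))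
    (C : G.Coloring (Fin 2)) : ∃ x, ∀ y, G.Adj x y ↔ C x = 0 ∧ C y = 1 := by
  classical
  by_cases h0 : ∃ a, C a = 0
  · obtain ⟨a0, ha0⟩ := h0
    obtain ⟨a, ha, hmax⟩ :=
      Finset.exists_max_image {a | C a = 0} (fun a => G.degree a) ⟨a0, by simpa⟩
    simp only [Finset.mem_filter, Finset.mem_univ, true_and] at ha hmax
    by_cases hfull : ∀ y, C y = 1 → G.Adj a y
    · refine ⟨a, fun y => ⟨fun hay => ⟨ha, ?_⟩, fun hy => hfull y hy.2⟩⟩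
      have := C.valid hay; omega
    · obtain ⟨y, hy, hay⟩ : ∃ y, C y = 1 ∧ ¬ G.Adj a y := by simpa using hfull
      refine ⟨y, fun z => ⟨fun hyz => ?_, fun h => by omega⟩⟩
      have hz : C z = 0 := by have := C.valid hyz; omega
      exact absurd (adj_of_adj_of_degree_le hfree C (ha.trans hz.symm) (hmax z hz) hyz.symm) hay
  · simp only [not_exists] at h0
    obtain ⟨x⟩ := ‹Nonempty V›
    refine ⟨x, fun y => ⟨fun hxy => ?_, fun h => h0 x h.1 |>.elim⟩⟩
    have := C.valid hxy; have := h0 x; have := h0 y; omega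

theorem exists_equiv_fin_adj_iff_of_twoK2_free [Fintype V] (hfree : ¬ Nonempty (twoK2 ↪g G))
    (C : G.Coloring (Fin 2)) :
    ∃ v : Fin (Fintype.card V) ≃ V, ∀ i j, i < j →
      (G.Adj (v i) (v j) ↔ C (v i) = 0 ∧ C (v j) = 1) := by
  induction hn : Fintype.card V generalizing V with
  | zero =>
    have := Fintype.card_eq_zero_iff.mp hn
    exact ⟨Equiv.equivOfIsEmpty _ _, fun i => i.elim0⟩
  | succ n ih =>
    classical
    have : Nonempty V := Fintype.card_pos_iff.mp (by omega)
    obtain ⟨x, hx⟩ := exists_adj_iff_of_twoK2_free hfree C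
    let G' := G.comap (Function.Embedding.subtype (· ≠ x))
    have hfree' : ¬ Nonempty (twoK2 ↪g G') :=
      fun ⟨e⟩ => hfree ⟨e.trans (Embedding.comap _ G)⟩
    have hn' : Fintype.card {y // y ≠ x} = n := by simp [hn]
    obtain ⟨v', hv'⟩ := ih hfree' (C.comap (Embedding.comap _ G).toHom) hn'
    refine ⟨(finSuccEquiv n).trans (v'.optionCongr.trans (Equiv.optionSubtypeNe x)), ?_⟩
    intro i j hij
    induction j using Fin.cases with
    | zero => exact absurd hij (Fin.not_lt_zero i)
    | succ j =>
      induction i using Fin.cases with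
      | zero => simpa using hx (v' j)
      | succ i =>
        have : G'.Adj (v' i) (v' j) ↔ C (v' i) = 0 ∧ C (v' j) = 1 :=
          hv' i j (Fin.succ_lt_succ_iff.mp hij)
        simpa [G'] using this

def letterGraph {ι : Type*} [LinearOrder ι] (w : ι → Fin 2) : SimpleGraph ι :=
  fromRel fun i j => i < j ∧ w i = 0 ∧ w j = 1

section letterGraph

variable {ι : Type*} [LinearOrder ι] (w : ι → Fin 2)

theorem letterGraph_adj_of_lt {i j : ι} (hij : i < j) :
    (letterGraph w).Adj i j ↔ w i = 0 ∧ w j = 1 := by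
  simp [letterGraph, hij, hij.ne, hij.not_gt]

theorem letterGraph_colorable : (letterGraph w).Colorable 2 := by
  refine ⟨Coloring.mk w fun {i j} hij => ?_⟩
  rcases hij.2 with ⟨-, hi, hj⟩ | ⟨-, hj, hi⟩ <;> simp [hi, hj]

theorem letterGraph_twoK2_free : ¬ Nonempty (twoK2 ↪g letterGraph w) := by
  rintro ⟨e⟩
  let R (i j : ι) : Prop := i < j ∧ w i = 0 ∧ w j = 1
  have ferrers {p q p' q' : ι} (h : R p q) (h' : R p' q') : R p q' ∨ R p' q := by
    rcases le_total p p' with hp | hp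
    exacts [.inl ⟨hp.trans_lt h'.1, h.2.1, h'.2.2⟩, .inr ⟨hp.trans_lt h.1, h'.2.1, h.2.2⟩]
  have orient (k : Fin 2) : ∃ s t, R (e (k, s)) (e (k, t)) := by
    rcases (e.map_adj_iff.2 (twoK2_adj.2 ⟨by simp, rfl⟩ : twoK2.Adj (k, 0) (k, 1))).2 with h | h
    exacts [⟨0, 1, h⟩, ⟨1, 0, h⟩]
  have same_edge {k k' s t : Fin 2} (h : R (e (k, s)) (e (k', t))) : k = k' :=
    (twoK2_adj.1 (e.map_adj_iff.1 ⟨h.1.ne, .inl h⟩)).2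
  obtain ⟨s₀, t₀, h₀⟩ := orient 0
  obtain ⟨s₁, t₁, h₁⟩ := orient 1
  rcases ferrers h₀ h₁ with h | h <;> exact absurd (same_edge h) (by decide)

def letterGraphIso (v : ι ≃ V)
    (hv : ∀ i j, i < j → (G.Adj (v i) (v j) ↔ w i = 0 ∧ w j = 1)) : letterGraph w ≃g G where
  toEquiv := v
  map_rel_iff' {i j} := by
    rcases lt_trichotomy i j with h | rfl | h
    · rw [letterGraph_adj_of_lt w h, hv i j h]
    · simp
    · rw [G.adj_comm, (letterGraph w).adj_comm, letterGraph_adj_of_lt w h, hv j i h]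

end letterGraph

end SimpleGraph

/-- A graph is a chain graph (bipartite with no induced `2K_2`) iff it is a
letter graph over the alphabet `{a, b} = Fin 2` with decoder `{(a, b)}`. -/
theorem chain_graph_iff_letter_rep {V : Type*} [Fintype V] (G : SimpleGraph V) :
    (G.Colorable 2 ∧ ¬ Nonempty (twoK2 ↪g G)) ↔
      ∃ (v : Fin (Fintype.card V) ≃ V) (w : Fin (Fintype.card V) → Fin 2),
        ∀ i j : Fin (Fintype.card V), i < j →
          (G.Adj (v i) (v j) ↔ w i = 0 ∧ w j = 1) := by
  constructor
  · rintro ⟨⟨C⟩, hfree⟩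
    obtain ⟨v, hv⟩ := exists_equiv_fin_adj_iff_of_twoK2_free hfree C
    exact ⟨v, C ∘ v, hv⟩
  · rintro ⟨v, w, hv⟩
    let e := letterGraphIso w v hv
    exact ⟨(letterGraph_colorable w).of_hom e.symm.toHom,
      fun ⟨f⟩ => letterGraph_twoK2_free w ⟨f.trans e.symm.toEmbedding⟩⟩
end

section
/- For all integers i, j ≥ 1: (a) the H-graph H_i is a bipartite permutation graph; (b) H_i contains no induced path on i + 4 vertices; (c) if j ≠ i then H_i contains no induced copy of H_j; (d) if j < i then H_i contains an induced path on j + 4 vertices. Consequently, defining X_i to be the class of all bipartite permutation graphs with no induced path on i + 4 vertices and no induced copy of H_j for any j < i, one has H_i ∈ X_i and H_i ∉ X_j for every j ≠ i, so the classes X_i, i ≥ 1, form an infinite antichain with respect to inclusion. -/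
open SimpleGraph

/-- `H` is an induced subgraph of `G`. -/
def IndSub {W V : Type*} (H : SimpleGraph W) (G : SimpleGraph V) : Prop :=
  Nonempty (H ↪g G)

/-- The `H`-graph `H_k`: a path `0, 1, …, k` with two pendant vertices
`k+1`, `k+2` attached to `0` and two pendant vertices `k+3`, `k+4` attached to `k`. -/
def Hgraph (k : ℕ) : SimpleGraph (Fin (k + 5)) :=
  SimpleGraph.fromRel (fun i j =>
    ((j : ℕ) = (i : ℕ) + 1 ∧ (j : ℕ) ≤ k) ∨
    ((i : ℕ) = 0 ∧ ((j : ℕ) = k + 1 ∨ (j : ℕ) = k + 2)) ∨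
    ((i : ℕ) = k ∧ ((j : ℕ) = k + 3 ∨ (j : ℕ) = k + 4)))

/-- The class `X_i` of bipartite permutation graphs with no induced `P_{i+4}`
and no induced `H_j` for `1 ≤ j < i`. -/
def Xcl (i : ℕ) : ∀ n : ℕ, Set (SimpleGraph (Fin n)) := fun _ =>
  {G | IsBPG G ∧ ¬ IndSub (SimpleGraph.pathGraph (i + 4)) G ∧
    ∀ j, 1 ≤ j → j < i → ¬ IndSub (Hgraph j) G}

lemma Hgraph_adj {k : ℕ} {a b : Fin (k+5)} :
    (Hgraph k).Adj a b ↔ (a : ℕ) ≠ b ∧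
      ( ((b:ℕ) = a + 1 ∧ (b:ℕ) ≤ k) ∨ ((a:ℕ)=0 ∧ ((b:ℕ)=k+1 ∨ (b:ℕ)=k+2)) ∨
        ((a:ℕ)=k ∧ ((b:ℕ)=k+3 ∨ (b:ℕ)=k+4)) ∨
        ((a:ℕ) = b + 1 ∧ (a:ℕ) ≤ k) ∨ ((b:ℕ)=0 ∧ ((a:ℕ)=k+1 ∨ (a:ℕ)=k+2)) ∨
        ((b:ℕ)=k ∧ ((a:ℕ)=k+3 ∨ (a:ℕ)=k+4)) ) := by
  simp only [Hgraph, fromRel_adj, ne_eq, Fin.ext_iff, or_assoc]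

lemma Hgraph_adj_mk {k a b : ℕ} (ha : a < k+5) (hb : b < k+5) :
    (Hgraph k).Adj ⟨a,ha⟩ ⟨b,hb⟩ ↔ (a ≠ b ∧
      ( (b = a + 1 ∧ b ≤ k) ∨ (a=0 ∧ (b=k+1 ∨ b=k+2)) ∨
        (a=k ∧ (b=k+3 ∨ b=k+4)) ∨
        (a = b + 1 ∧ a ≤ k) ∨ (b=0 ∧ (a=k+1 ∨ a=k+2)) ∨
        (b=k ∧ (a=k+3 ∨ a=k+4)) )) := Hgraph_adj


lemma isBPG_Hgraph (i : ℕ) (hi : 1 ≤ i) : IsBPG (Hgraph i) := by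
  have hc : Fintype.card (Fin (i+5)) = i + 5 := Fintype.card_fin _
  have hv : ∀ p : ℕ, p < i + 5 → (if p < 2 then i+1+p else if p ≤ i+2 then p-2 else p) < i + 5 := by
    intro p hp; split_ifs <;> omega
  let vf : Fin (i+5) → Fin (i+5) := fun p =>
    ⟨if (p:ℕ) < 2 then i+1+(p:ℕ) else if (p:ℕ) ≤ i+2 then (p:ℕ)-2 else (p:ℕ), hv p p.isLt⟩
  have hinj : Function.Injective vf := by
    intro a b hab
    have h2 : (vf a : ℕ) = (vf b : ℕ) := congrArg Fin.val hab
    have ha := a.isLt; have hb := b.isLt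
    simp only [vf] at h2
    apply Fin.ext
    split_ifs at h2 <;> omega
  let e : Fin (i+5) ≃ Fin (i+5) := Equiv.ofBijective vf (Finite.injective_iff_bijective.mp hinj)
  have hw : ∀ p : ℕ, p < i + 5 → (if p < 2 then 0 else if p ≤ i+2 then p-1 else i+2) < i + 3 := by
    intro p hp; split_ifs <;> omega
  refine ⟨i+3, (finCongr hc).trans e, fun p =>
    ⟨if (p:ℕ) < 2 then 0 else if (p:ℕ) ≤ i+2 then (p:ℕ)-1 else i+2, hw p (Nat.lt_of_lt_of_eq p.isLt hc)⟩, ?_⟩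
  intro p q hpq
  have hp : (p:ℕ) < i + 5 := Nat.lt_of_lt_of_eq p.isLt hc
  have hq : (q:ℕ) < i + 5 := Nat.lt_of_lt_of_eq q.isLt hc
  have hlt : (p : ℕ) < (q : ℕ) := hpq
  have hval : ∀ r : Fin (Fintype.card (Fin (i+5))),
      ((((finCongr hc).trans e) r) : ℕ) =
        if (r:ℕ) < 2 then i+1+(r:ℕ) else if (r:ℕ) ≤ i+2 then (r:ℕ)-2 else (r:ℕ) :=
    fun r => rfl
  rw [Hgraph_adj]
  simp only [hval]
  split_ifs <;> first | omega | (rw [iff_false]; omega)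

def phi (i v : ℕ) : ℕ := if v ≤ i then v else if v ≤ i+2 then 0 else i

lemma no_Hgraph_sub (i j : ℕ) (hi : 1 ≤ i) (hj : 1 ≤ j) (hne : j ≠ i) :
    ¬ IndSub (Hgraph j) (Hgraph i) := by
  rintro ⟨f⟩
  rcases Nat.lt_or_ge i j with hij | hij
  · have hc : j + 5 ≤ i + 5 := by
      have := Fintype.card_le_of_injective f f.injective
      simpa using this
    omega
  have hji : j < i := by omega
  have hub : ∀ c y1 y2 y3 : Fin (i+5), (Hgraph i).Adj c y1 → (Hgraph i).Adj c y2 →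
      (Hgraph i).Adj c y3 → (y1:ℕ) ≠ y2 → (y1:ℕ) ≠ y3 → (y2:ℕ) ≠ y3 →
      (c:ℕ) = 0 ∨ (c:ℕ) = i := by
    intro c y1 y2 y3 a1 a2 a3 d12 d13 d23
    rw [Hgraph_adj] at a1 a2 a3
    omega
  have inj3 : ∀ a b : Fin (j+5), (a:ℕ) ≠ (b:ℕ) → ((f a : Fin (i+5)) : ℕ) ≠ ((f b : Fin (i+5)) : ℕ) :=
    fun a b hab h => hab (congrArg Fin.val (f.injective (Fin.ext h)))
  have adjj : ∀ a b : Fin (j+5), (Hgraph j).Adj a b → (Hgraph i).Adj (f a) (f b) :=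
    fun a b h => f.map_adj_iff.mpr h
  have hz5 : (0:ℕ) < j+5 := by omega
  have hpj : j < j+5 := by omega
  have h0 : ((f ⟨0, hz5⟩ : Fin (i+5)) : ℕ) = 0 ∨ ((f ⟨0, hz5⟩ : Fin (i+5)) : ℕ) = i := by
    refine hub _ (f ⟨1, by omega⟩) (f ⟨j+1, by omega⟩) (f ⟨j+2, by omega⟩)
      (adjj _ _ ((Hgraph_adj_mk _ _).mpr (by omega)))
      (adjj _ _ ((Hgraph_adj_mk _ _).mpr (by omega)))
      (adjj _ _ ((Hgraph_adj_mk _ _).mpr (by omega)))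
      (inj3 _ _ (show (1:ℕ) ≠ j+1 by omega))
      (inj3 _ _ (show (1:ℕ) ≠ j+2 by omega))
      (inj3 _ _ (show (j+1:ℕ) ≠ j+2 by omega))
  have hJ : ((f ⟨j, hpj⟩ : Fin (i+5)) : ℕ) = 0 ∨ ((f ⟨j, hpj⟩ : Fin (i+5)) : ℕ) = i := by
    refine hub _ (f ⟨j-1, by omega⟩) (f ⟨j+3, by omega⟩) (f ⟨j+4, by omega⟩)
      (adjj _ _ ((Hgraph_adj_mk _ _).mpr (by omega)))
      (adjj _ _ ((Hgraph_adj_mk _ _).mpr (by omega)))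
      (adjj _ _ ((Hgraph_adj_mk _ _).mpr (by omega)))
      (inj3 _ _ (show (j-1:ℕ) ≠ j+3 by omega))
      (inj3 _ _ (show (j-1:ℕ) ≠ j+4 by omega))
      (inj3 _ _ (show (j+3:ℕ) ≠ j+4 by omega))
  have hd : ((f ⟨0, hz5⟩ : Fin (i+5)) : ℕ) ≠ ((f ⟨j, hpj⟩ : Fin (i+5)) : ℕ) :=
    inj3 _ _ (show (0:ℕ) ≠ j by omega)
  have hstep : ∀ a b : Fin (i+5), (Hgraph i).Adj a b →
      phi i (a:ℕ) ≤ phi i (b:ℕ) + 1 ∧ phi i (b:ℕ) ≤ phi i (a:ℕ) + 1 := by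
    intro a b hab
    rw [Hgraph_adj] at hab
    unfold phi
    split_ifs <;> omega
  have walk : ∀ s : ℕ, (h : s < j+5) → s ≤ j →
      phi i ((f ⟨s,h⟩ : Fin (i+5)) : ℕ) ≤ phi i ((f ⟨0,hz5⟩ : Fin (i+5)) : ℕ) + s ∧
      phi i ((f ⟨0,hz5⟩ : Fin (i+5)) : ℕ) ≤ phi i ((f ⟨s,h⟩ : Fin (i+5)) : ℕ) + s := by
    intro s
    induction s with
    | zero => intro h _; exact ⟨Nat.le_refl _, Nat.le_refl _⟩
    | succ n ih =>
      intro h hs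
      have hn : n < j+5 := by omega
      have hadj : (Hgraph j).Adj ⟨n, hn⟩ ⟨n+1, h⟩ := (Hgraph_adj_mk _ _).mpr (by omega)
      have h1 := hstep _ _ (adjj _ _ hadj)
      have h2 := ih hn (by omega)
      omega
  have wj := walk j hpj (Nat.le_refl j)
  have p0 : phi i 0 = 0 := by unfold phi; rw [if_pos (by omega)]
  have pI : phi i i = i := by unfold phi; rw [if_pos (Nat.le_refl i)]
  rcases h0 with h0 | h0 <;> rcases hJ with hJ | hJ
  · exact hd (h0.trans hJ.symm)
  · rw [h0, hJ, p0, pI] at wj; omega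
  · rw [h0, hJ, p0, pI] at wj; omega
  · exact hd (h0.trans hJ.symm)

def psi (t i v : ℕ) : ℕ := if v < t ∨ v = i+1 ∨ v = i+2 then 0 else 1

lemma psi_p1 (t i : ℕ) : psi t i (i+1) = 0 := by
  unfold psi; rw [if_pos (Or.inr (Or.inl rfl))]

lemma psi_p3 (t i : ℕ) (h : t < i) : psi t i (i+3) = 1 := by
  unfold psi; rw [if_neg (by omega)]

lemma no_long_path (i : ℕ) (hi : 1 ≤ i) : ¬ IndSub (pathGraph (i+4)) (Hgraph i) := by
  rintro ⟨f⟩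
  classical
  have hinj : Function.Injective f := f.injective
  set s : Finset (Fin (i+5)) := Finset.univ.image f with hs
  have hcard : s.card = i + 4 := by
    rw [hs, Finset.card_image_of_injective _ hinj, Finset.card_univ, Fintype.card_fin]
  obtain ⟨m, hm⟩ : ∃ m, m ∉ s := by
    by_contra h; push_neg at h
    have := Finset.eq_univ_iff_forall.mpr h
    rw [this, Finset.card_univ, Fintype.card_fin] at hcard; omega
  have hsub : s ⊆ Finset.univ.erase m := fun x hx =>
    Finset.mem_erase.mpr ⟨fun h => hm (h ▸ hx), Finset.mem_univ x⟩
  have heq : s = Finset.univ.erase m := Finset.eq_of_subset_of_card_le hsub (by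
    rw [Finset.card_erase_of_mem (Finset.mem_univ m), Finset.card_univ, Fintype.card_fin, hcard]
    omega)
  have hsurj : ∀ y : Fin (i+5), (y:ℕ) ≠ (m:ℕ) → ∃ x, f x = y := by
    intro y hy
    have : y ∈ s := heq ▸ Finset.mem_erase.mpr ⟨fun h => hy (congrArg Fin.val h), Finset.mem_univ y⟩
    obtain ⟨x, _, hx⟩ := Finset.mem_image.mp this
    exact ⟨x, hx⟩
  have hmr : ∀ x, ((f x : Fin (i+5)) : ℕ) ≠ (m : ℕ) := by
    intro x h
    have hfx : f x ∈ s := Finset.mem_image.mpr ⟨x, Finset.mem_univ x, rfl⟩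
    exact hm (Fin.ext h ▸ hfx)
  have key : ∀ c y1 y2 y3 : Fin (i+5), (Hgraph i).Adj c y1 → (Hgraph i).Adj c y2 →
      (Hgraph i).Adj c y3 → (y1:ℕ) ≠ y2 → (y1:ℕ) ≠ y3 → (y2:ℕ) ≠ y3 →
      (c:ℕ) ≠ m → (y1:ℕ) ≠ m → (y2:ℕ) ≠ m → (y3:ℕ) ≠ m → False := by
    intro c y1 y2 y3 a1 a2 a3 d12 d13 d23 hc h1 h2 h3
    obtain ⟨xc, rfl⟩ := hsurj c hc
    obtain ⟨x1, rfl⟩ := hsurj y1 h1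
    obtain ⟨x2, rfl⟩ := hsurj y2 h2
    obtain ⟨x3, rfl⟩ := hsurj y3 h3
    rw [f.map_adj_iff, pathGraph_adj] at a1 a2 a3
    have e12 : (x1:ℕ) ≠ x2 := fun h => d12 (congrArg (fun z => ((f z) : ℕ)) (Fin.ext h))
    have e13 : (x1:ℕ) ≠ x3 := fun h => d13 (congrArg (fun z => ((f z) : ℕ)) (Fin.ext h))
    have e23 : (x2:ℕ) ≠ x3 := fun h => d23 (congrArg (fun z => ((f z) : ℕ)) (Fin.ext h))
    omega
  have hm5 := m.isLt
  -- case analysis on the missing vertex m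
  rcases Nat.lt_or_ge (m:ℕ) (i+1) with hmi | hmi
  · rcases Nat.eq_zero_or_pos (m:ℕ) with h0 | h0
    · -- m = 0 : pendant i+1 has no neighbour in the image
      obtain ⟨x, hx⟩ := hsurj ⟨i+1, by omega⟩ (by simp only [Fin.val_mk]; omega)
      have hadj : (pathGraph (i+4)).Adj x ⟨if (x:ℕ) = 0 then 1 else (x:ℕ)-1, by have := x.isLt; split <;> omega⟩ := by
        rw [pathGraph_adj]; simp only [Fin.val_mk]
        have := x.isLt
        split_ifs <;> omega
      have hA := f.map_adj_iff.mpr hadj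
      rw [hx, Hgraph_adj] at hA
      have hz := hmr ⟨if (x:ℕ) = 0 then 1 else (x:ℕ)-1, by have := x.isLt; split <;> omega⟩
      simp only [Fin.val_mk] at hA
      omega
    · rcases Nat.lt_or_ge (m:ℕ) i with hmid | hmid
      · -- 1 ≤ m ≤ i-1 : the image is disconnected
        have step : ∀ a b : Fin (i+5), (Hgraph i).Adj a b → (a:ℕ) ≠ m → (b:ℕ) ≠ m →
            psi (m:ℕ) i (a:ℕ) = psi (m:ℕ) i (b:ℕ) := by
          intro a b hab ha hb
          rw [Hgraph_adj] at hab
          simp only [psi]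
          split_ifs <;> omega
        have h04 : (0:ℕ) < i+4 := by omega
        have walk : ∀ s : ℕ, (h : s < i+4) →
            psi (m:ℕ) i ((f ⟨s, h⟩ : Fin (i+5)) : ℕ) = psi (m:ℕ) i ((f ⟨0, h04⟩ : Fin (i+5)) : ℕ) := by
          intro s
          induction s with
          | zero => intro h; rfl
          | succ n ih =>
            intro h
            have hn : n < i+4 := by omega
            have hadj : (pathGraph (i+4)).Adj ⟨n, hn⟩ ⟨n+1, h⟩ :=
              pathGraph_adj.mpr (Or.inl rfl)
            have := step _ _ (f.map_adj_iff.mpr hadj) (hmr _) (hmr _)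
            rw [← this]; exact ih hn
        obtain ⟨x1, hx1⟩ := hsurj ⟨i+1, by omega⟩ (by simp only [Fin.val_mk]; omega)
        obtain ⟨x3, hx3⟩ := hsurj ⟨i+3, by omega⟩ (by simp only [Fin.val_mk]; omega)
        have w1 := walk (x1:ℕ) x1.isLt
        have w3 := walk (x3:ℕ) x3.isLt
        rw [Fin.eta, hx1] at w1
        rw [Fin.eta, hx3] at w3
        simp only [Fin.val_mk] at w1 w3
        rw [psi_p1] at w1
        rw [psi_p3 _ _ hmid] at w3
        omega
      · -- m = i : pendant i+3 has no neighbour in the image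
        have h0 : (m:ℕ) = i := by omega
        obtain ⟨x, hx⟩ := hsurj ⟨i+3, by omega⟩ (by simp only [Fin.val_mk]; omega)
        have hadj : (pathGraph (i+4)).Adj x ⟨if (x:ℕ) = 0 then 1 else (x:ℕ)-1, by have := x.isLt; split <;> omega⟩ := by
          rw [pathGraph_adj]; simp only [Fin.val_mk]
          have := x.isLt
          split_ifs <;> omega
        have hA := f.map_adj_iff.mpr hadj
        rw [hx, Hgraph_adj] at hA
        have hz := hmr ⟨if (x:ℕ) = 0 then 1 else (x:ℕ)-1, by have := x.isLt; split <;> omega⟩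
        simp only [Fin.val_mk] at hA
        omega
  · rcases Nat.lt_or_ge (m:ℕ) (i+3) with hmp | hmp
    · -- m ∈ {i+1, i+2} : vertex i has three neighbours in the image
      refine key ⟨i, by omega⟩ ⟨i-1, by omega⟩ ⟨i+3, by omega⟩ ⟨i+4, by omega⟩ ?_ ?_ ?_ ?_ ?_ ?_ ?_ ?_ ?_ ?_ <;>
        first
          | (rw [Hgraph_adj_mk]; omega)
          | (simp only [Fin.val_mk]; omega)
    · -- m ∈ {i+3, i+4} : vertex 0 has three neighbours in the image
      refine key ⟨0, by omega⟩ ⟨1, by omega⟩ ⟨i+1, by omega⟩ ⟨i+2, by omega⟩ ?_ ?_ ?_ ?_ ?_ ?_ ?_ ?_ ?_ ?_ <;>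
        first
          | (rw [Hgraph_adj_mk]; omega)
          | (simp only [Fin.val_mk]; omega)

lemma path_sub (i j : ℕ) (hj : 1 ≤ j) (hji : j < i) :
    IndSub (pathGraph (j+4)) (Hgraph i) := by
  have hg : ∀ s : Fin (j+4),
      (if (s:ℕ) = 0 then i+1 else if (s:ℕ) ≤ i+1 then (s:ℕ)-1 else i+3) < i+5 := by
    intro s; have := s.isLt; split_ifs <;> omega
  refine ⟨⟨⟨fun s => ⟨if (s:ℕ) = 0 then i+1 else if (s:ℕ) ≤ i+1 then (s:ℕ)-1 else i+3, hg s⟩, ?_⟩,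
    fun {a b} => ?_⟩⟩
  · intro a b hab
    have h2 := congrArg Fin.val hab
    simp only [Fin.val_mk] at h2
    have ha := a.isLt; have hb := b.isLt
    apply Fin.ext
    split_ifs at h2 <;> omega
  · rw [pathGraph_adj]
    show (Hgraph i).Adj ⟨_, hg a⟩ ⟨_, hg b⟩ ↔ _
    rw [Hgraph_adj]
    simp only [Fin.val_mk]
    have ha := a.isLt; have hb := b.isLt
    split_ifs <;> first | omega | (simp only [false_and, and_false, false_or, or_false, true_and, and_true]; omega)

/-- Properties of the `H`-graphs: `H_i` is a bipartite permutation graph, has no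
induced `P_{i+4}`, contains no induced `H_j` for `j ≠ i`, and contains an induced
`P_{j+4}` for `j < i`; consequently `H_i ∈ X_i`, `H_i ∉ X_j` for `j ≠ i`, and the
classes `X_i` form an infinite antichain with respect to inclusion. -/
theorem Hgraph_antichain :
    ∀ i, 1 ≤ i → ∀ j, 1 ≤ j →
      IsBPG (Hgraph i) ∧
      ¬ IndSub (SimpleGraph.pathGraph (i + 4)) (Hgraph i) ∧
      (j ≠ i → ¬ IndSub (Hgraph j) (Hgraph i)) ∧
      (j < i → IndSub (SimpleGraph.pathGraph (j + 4)) (Hgraph i)) ∧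
      Hgraph i ∈ Xcl i (i + 5) ∧
      (j ≠ i → Hgraph i ∉ Xcl j (i + 5)) ∧
      (j ≠ i → ¬ ∀ n, Xcl i n ⊆ Xcl j n) := by
  intro i hi j hj
  have parta := isBPG_Hgraph i hi
  have partb := no_long_path i hi
  have parte : Hgraph i ∈ Xcl i (i+5) :=
    ⟨parta, partb, fun j' hj' hlt => no_Hgraph_sub i j' hi hj' (by omega)⟩
  have selfsub : IndSub (Hgraph i) (Hgraph i) := ⟨SimpleGraph.Embedding.refl⟩
  have partf : j ≠ i → Hgraph i ∉ Xcl j (i+5) := by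
    intro hne hmem
    rcases Nat.lt_or_ge j i with hlt | hge
    · exact hmem.2.1 (path_sub i j hj hlt)
    · exact hmem.2.2 i hi (by omega) selfsub
  exact ⟨parta, partb, fun hne => no_Hgraph_sub i j hi hj hne,
    fun hlt => path_sub i j hj hlt, parte, partf,
    fun hne hall => partf hne (hall (i+5) parte)⟩
end

section
/- For all integers k ≥ 1 and t ≥ 1 there exists a constant c = c(k, t) such that every connected bipartite permutation graph containing no induced path on k vertices and no induced copy of the chain graph Z_t has neighbourhood diversity at most c. -/
open SimpleGraph

/-- Two vertices are similar if no third vertex distinguishes them. -/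
def SimilarVert {V : Type*} (G : SimpleGraph V) (x y : V) : Prop :=
  ∀ z, z ≠ x → z ≠ y → (G.Adj z x ↔ G.Adj z y)

/-- The neighbourhood diversity of `G`: the number of similarity classes. -/
noncomputable def nd {V : Type*} (G : SimpleGraph V) : ℕ :=
  {S : Set V | ∃ x, S = {y | SimilarVert G x y}}.ncard

/-!
Order the vertices as in the defining word, so that `x ~ y` iff the later of the two carries the
letter one larger. Letters change by one along edges and a connected `P_k`-free graph has
diameter below `k - 1`, so only `k` consecutive letters occur. For vertices `x` of a fixed letter,
the trace of `N(x)` on the class of the next (or previous) letter consists of the vertices after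
(before) `x`, so these traces are nested; `t + 1` distinct nested traces give an induced `Z_t`.
Since `N(x)` is the union of its two traces, each letter contributes at most `t²` neighbourhoods.
-/

theorem IsChain.exists_strictAnti_fin {α : Type*} [PartialOrder α] {s : Set α}
    (hs : IsChain (· ≤ ·) s) {n : ℕ} (hn : n < s.ncard) :
    ∃ f : Fin (n + 1) → α, StrictAnti f ∧ ∀ i, f i ∈ s := by
  induction n generalizing s with
  | zero =>
    obtain ⟨x, hx⟩ := Set.nonempty_of_ncard_ne_zero hn.ne'
    exact ⟨fun _ => x, Subsingleton.strictAnti (α := Fin 1) _, fun _ => hx⟩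
  | succ n ih =>
    obtain ⟨m, hm⟩ := (Set.finite_of_ncard_pos (n.succ_pos.trans hn)).exists_maximal
      (Set.nonempty_of_ncard_ne_zero (by omega))
    obtain ⟨g, hg, hgs⟩ := ih (hs.mono Set.sdiff_subset)
      (by rw [Set.ncard_sdiff_singleton_of_mem hm.1]; omega)
    have hgm : g 0 < m := lt_of_le_of_ne
      ((hs.total (hgs 0).1 hm.1).elim id fun h => hm.2 (hgs 0).1 h) (hgs 0).2
    exact ⟨Matrix.vecCons m g, strictAnti_vecCons.2 ⟨hgm, hg⟩,
      Fin.cases hm.1 fun i => (hgs i).1⟩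

theorem Set.ncard_image2_le {α β γ : Type*} (f : α → β → γ) {s : Set α} {t : Set β}
    (hs : s.Finite) (ht : t.Finite) : (Set.image2 f s t).ncard ≤ s.ncard * t.ncard := by
  rw [← Set.image_uncurry_prod, ← Set.ncard_prod]
  exact Set.ncard_image_le (hs.prod ht)

theorem Set.ncard_range_le_of_factorsThrough {α β γ : Type*} {f : α → β} {g : α → γ}
    (hfg : f.FactorsThrough g) (hg : (Set.range g).Finite) :
    (Set.range f).ncard ≤ (Set.range g).ncard := by
  rcases isEmpty_or_nonempty α with hα | ⟨⟨a⟩⟩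
  · simp [Set.range_eq_empty]
  · rw [← hfg.extend_comp (fun _ => f a), Set.range_comp]
    exact Set.ncard_image_le hg

section Similarity

variable {V : Type*} {G : SimpleGraph V} {x y z : V}

theorem SimilarVert.symm (h : SimilarVert G x y) : SimilarVert G y x :=
  fun u huy hux => (h u hux huy).symm

theorem SimilarVert.trans (hxy : SimilarVert G x y) (hyz : SimilarVert G y z) :
    SimilarVert G x z := by
  intro u hux huz
  by_cases huy : u = y
  · subst huy
    by_cases hxz : x = z
    · rw [hxz]
    · rw [G.adj_comm u x, hyz x (Ne.symm hux) hxz, G.adj_comm x z,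
        hxy z (Ne.symm hxz) (Ne.symm huz), G.adj_comm]
  · exact (hxy u hux huy).trans (hyz u huy huz)

theorem similarVert_of_neighborSet_eq (h : G.neighborSet x = G.neighborSet y) :
    SimilarVert G x y := fun u _ _ => by
  simpa only [SimpleGraph.mem_neighborSet, G.adj_comm u] using Set.ext_iff.mp h u

theorem nd_le_ncard_range_neighborSet [Finite V] (G : SimpleGraph V) :
    nd G ≤ (Set.range G.neighborSet).ncard := by
  have hclasses : {S : Set V | ∃ x, S = {y | SimilarVert G x y}} =
      Set.range fun x => {y | SimilarVert G x y} := by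
    ext S; exact exists_congr fun _ => eq_comm
  rw [nd, hclasses]
  refine Set.ncard_range_le_of_factorsThrough (fun x y hxy => ?_) (Set.toFinite _)
  have hsim := similarVert_of_neighborSet_eq hxy
  ext z
  exact ⟨hsim.symm.trans, hsim.trans⟩

end Similarity

namespace SimpleGraph

variable {V : Type*} {G : SimpleGraph V}

theorem Walk.dist_getVert_getVert_of_length_eq_dist {u v : V} {p : G.Walk u v}
    (hp : p.length = G.dist u v) {i j : ℕ} (hij : i ≤ j) (hj : j ≤ p.length) :
    G.dist (p.getVert i) (p.getVert j) = j - i := by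
  have h := length_eq_dist_of_subwalk hp (((p.drop i).isSubwalk_take (j - i)).trans
    (p.isSubwalk_drop i))
  rw [Walk.take_length, Walk.drop_length, Walk.drop_getVert, Nat.add_sub_cancel' hij] at h
  omega

theorem Connected.indSub_pathGraph_of_le_dist_add_one (hG : G.Connected) {k : ℕ} {u v : V}
    (hk : k ≤ G.dist u v + 1) : IndSub (pathGraph k) G := by
  obtain ⟨p, hp⟩ := hG.exists_walk_length_eq_dist u v
  have hdist : ∀ i j : Fin k, i ≤ j → G.dist (p.getVert i) (p.getVert j) = j - i :=
    fun i j hij => p.dist_getVert_getVert_of_length_eq_dist hp hij (by omega)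
  have hinj : Function.Injective fun i : Fin k => p.getVert i := fun i j hij => by
    rcases le_total i j with h | h
    · have := hdist i j h; simp only [hij, dist_self] at this; omega
    · have := hdist j i h; simp only [hij, dist_self] at this; omega
  refine ⟨⟨⟨_, hinj⟩, fun {i j} => ?_⟩⟩
  change G.Adj (p.getVert i) (p.getVert j) ↔ (pathGraph k).Adj i j
  rw [← dist_eq_one_iff_adj, pathGraph_adj]
  rcases le_total i j with h | h
  · rw [hdist i j h]; omega
  · rw [dist_comm, hdist j i h]; omega

theorem Walk.le_add_length {f : V → ℕ} (hf : ∀ x y, G.Adj x y → f y ≤ f x + 1) {u v : V}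
    (p : G.Walk u v) : f v ≤ f u + p.length := by
  induction p with
  | nil => simp
  | cons h _ ih => have := hf _ _ h; rw [length_cons]; omega

theorem Reachable.le_add_dist {f : V → ℕ} (hf : ∀ x y, G.Adj x y → f y ≤ f x + 1) {u v : V}
    (h : G.Reachable u v) : f v ≤ f u + G.dist u v := by
  obtain ⟨p, hp⟩ := h.exists_walk_length_eq_dist
  exact hp ▸ p.le_add_length hf

end SimpleGraph

section Zgraph

variable {V : Type*} {G : SimpleGraph V}

theorem indSub_Zgraph_of_adj_iff_le {t : ℕ} {a b : Fin t → V}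
    (haa : ∀ p q, ¬ G.Adj (a p) (a q)) (hbb : ∀ p q, ¬ G.Adj (b p) (b q))
    (hab : ∀ p q, G.Adj (a p) (b q) ↔ p ≤ q) : IndSub (Zgraph t) G := by
  have hinj : Function.Injective (Sum.elim a b) := by
    rintro (p | p) (q | q) h <;> simp only [Sum.elim_inl, Sum.elim_inr] at h
    · exact congrArg _ (le_antisymm ((hab p q).1 (h ▸ (hab q q).2 le_rfl))
        ((hab q p).1 (h ▸ (hab p p).2 le_rfl)))
    · exact absurd (h ▸ (hab p p).2 le_rfl) (hbb q p)
    · exact absurd (h ▸ (hab q q).2 le_rfl) (hbb p q)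
    · exact congrArg _ (le_antisymm ((hab p q).1 (h ▸ (hab p p).2 le_rfl))
        ((hab q p).1 (h ▸ (hab q q).2 le_rfl)))
  refine ⟨⟨⟨_, hinj⟩, fun {x y} => ?_⟩⟩
  rcases x with p | p <;> rcases y with q | q <;>
    simp [Zgraph, haa, hbb, hab, G.adj_comm (b p)]

theorem indSub_Zgraph_of_isChain {t : ℕ} {A B : Set V} (hA : G.IsIndepSet A)
    (hB : G.IsIndepSet B) (hchain : IsChain (· ⊆ ·) ((G.neighborSet · ∩ B) '' A))
    (ht : t < ((G.neighborSet · ∩ B) '' A).ncard) : IndSub (Zgraph t) G := by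
  obtain ⟨N, hN, hNmem⟩ := IsChain.exists_strictAnti_fin hchain ht
  choose a haA haN using hNmem
  choose b hbN hbN' using fun q : Fin t => Set.exists_of_ssubset (hN q.castSucc_lt_succ)
  have hbB : ∀ q, b q ∈ B := fun q => by
    have h := hbN q
    rw [← haN] at h
    exact h.2
  have hadj : ∀ p q, G.Adj (a p) (b q) ↔ b q ∈ N p := fun p q => by
    rw [← haN]; simp [hbB q]
  have hindep : ∀ {S : Set V}, G.IsIndepSet S → ∀ x ∈ S, ∀ y ∈ S, ¬ G.Adj x y :=
    fun hS x hx y hy hxy => hS hx hy (G.ne_of_adj hxy) hxy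
  refine indSub_Zgraph_of_adj_iff_le (a := a ∘ Fin.castSucc) (b := b)
    (fun p q => hindep hA _ (haA _) _ (haA _)) (fun p q => hindep hB _ (hbB p) _ (hbB q))
    fun p q => ?_
  rw [Function.comp_apply, hadj]
  refine ⟨fun h => not_lt.1 fun hqp => hbN' q (hN.antitone ?_ h),
    fun hpq => hN.antitone (Fin.castSucc_le_castSucc_iff.2 hpq) (hbN q)⟩
  exact Fin.succ_le_castSucc_iff.2 hqp

end Zgraph

def IsPathLetterRep {V ι : Type*} [LinearOrder ι] (G : SimpleGraph V) (pos : V → ι)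
    (letter : V → ℕ) : Prop :=
  ∀ x y, G.Adj x y ↔
    pos x < pos y ∧ letter y = letter x + 1 ∨ pos y < pos x ∧ letter x = letter y + 1

theorem IsBPG.exists_isPathLetterRep {V : Type*} [Fintype V] {G : SimpleGraph V}
    (hG : IsBPG G) : ∃ (pos : V → Fin (Fintype.card V)) (letter : V → ℕ),
      IsPathLetterRep G pos letter := by
  obtain ⟨k, v, w, hw⟩ := hG
  refine ⟨v.symm, fun x => w (v.symm x), fun x y => ?_⟩
  rcases lt_trichotomy (v.symm x) (v.symm y) with h | h | h
  · simpa [h, h.not_gt] using hw _ _ h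
  · simp [v.symm.injective h]
  · simpa [h, h.not_gt, G.adj_comm x] using hw _ _ h

namespace IsPathLetterRep

variable {V ι : Type*} [LinearOrder ι] {G : SimpleGraph V} {pos : V → ι} {letter : V → ℕ}

theorem letter_eq_or_of_adj (h : IsPathLetterRep G pos letter) {x y : V} (hxy : G.Adj x y) :
    letter y = letter x + 1 ∨ letter x = letter y + 1 := by
  rcases (h x y).1 hxy with ⟨-, hl⟩ | ⟨-, hl⟩
  exacts [Or.inl hl, Or.inr hl]

theorem letter_le_add_one_of_adj (h : IsPathLetterRep G pos letter) {x y : V}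
    (hxy : G.Adj x y) : letter y ≤ letter x + 1 := by
  rcases h.letter_eq_or_of_adj hxy with hl | hl <;> omega

theorem isIndepSet_letter_preimage (h : IsPathLetterRep G pos letter) (a : ℕ) :
    G.IsIndepSet (letter ⁻¹' {a}) := fun x hx y hy _ hxy => by
  simp only [Set.mem_preimage, Set.mem_singleton_iff] at hx hy
  rcases h.letter_eq_or_of_adj hxy with hl | hl <;> omega

theorem neighborSet_subset (h : IsPathLetterRep G pos letter) (x : V) :
    G.neighborSet x ⊆ letter ⁻¹' {letter x + 1} ∪ letter ⁻¹' {letter x - 1} := fun y hy => by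
  simp only [Set.mem_union, Set.mem_preimage, Set.mem_singleton_iff]
  rcases h.letter_eq_or_of_adj hy with hl | hl <;> omega

theorem isChain_neighborSet_inter (h : IsPathLetterRep G pos letter) (a b : ℕ) :
    IsChain (· ⊆ ·) ((G.neighborSet · ∩ letter ⁻¹' {b}) '' (letter ⁻¹' {a})) := by
  rintro _ ⟨x, hx, rfl⟩ _ ⟨x', hx', rfl⟩ -
  wlog hle : pos x ≤ pos x' generalizing x x'
  · exact (this x' hx' x hx (le_of_not_ge hle)).symm
  simp only [Set.mem_preimage, Set.mem_singleton_iff] at hx hx'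
  by_cases hb : b = a + 1
  · refine Or.inr fun y ⟨hy, hyb⟩ => ⟨?_, hyb⟩
    simp only [Set.mem_preimage, Set.mem_singleton_iff, SimpleGraph.mem_neighborSet] at hy hyb ⊢
    rcases (h _ _).1 hy with ⟨hlt, -⟩ | ⟨-, hl⟩
    · exact (h _ _).2 (Or.inl ⟨hle.trans_lt hlt, by omega⟩)
    · omega
  · refine Or.inl fun y ⟨hy, hyb⟩ => ⟨?_, hyb⟩
    simp only [Set.mem_preimage, Set.mem_singleton_iff, SimpleGraph.mem_neighborSet] at hy hyb ⊢
    rcases (h _ _).1 hy with ⟨-, hl⟩ | ⟨hlt, hl⟩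
    · omega
    · exact (h _ _).2 (Or.inr ⟨hlt.trans_le hle, by omega⟩)

theorem ncard_neighborSet_inter_image_le (h : IsPathLetterRep G pos letter) {t : ℕ}
    (hZ : ¬ IndSub (Zgraph t) G) (a b : ℕ) :
    ((G.neighborSet · ∩ letter ⁻¹' {b}) '' (letter ⁻¹' {a})).ncard ≤ t :=
  not_lt.1 fun ht => hZ <| indSub_Zgraph_of_isChain (h.isIndepSet_letter_preimage a)
    (h.isIndepSet_letter_preimage b) (h.isChain_neighborSet_inter a b) ht

theorem ncard_range_neighborSet_le [Finite V] (h : IsPathLetterRep G pos letter) {t : ℕ}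
    (hZ : ¬ IndSub (Zgraph t) G) (s : Finset ℕ) (hs : ∀ x, letter x ∈ s) :
    (Set.range G.neighborSet).ncard ≤ s.card * (t * t) := by
  let traces (b a : ℕ) := (G.neighborSet · ∩ letter ⁻¹' {b}) '' (letter ⁻¹' {a})
  have hcover : Set.range G.neighborSet ⊆
      ⋃ a ∈ s, Set.image2 (· ∪ ·) (traces (a + 1) a) (traces (a - 1) a) := by
    rintro _ ⟨x, rfl⟩
    refine Set.mem_biUnion (hs x) ⟨_, ⟨x, rfl, rfl⟩, _, ⟨x, rfl, rfl⟩, ?_⟩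
    dsimp only
    rw [← Set.inter_union_distrib_left, Set.inter_eq_left.2 (h.neighborSet_subset x)]
  calc (Set.range G.neighborSet).ncard
      ≤ (⋃ a ∈ s, Set.image2 (· ∪ ·) (traces (a + 1) a) (traces (a - 1) a)).ncard :=
        Set.ncard_le_ncard hcover (Set.toFinite _)
    _ ≤ ∑ a ∈ s, (Set.image2 (· ∪ ·) (traces (a + 1) a) (traces (a - 1) a)).ncard :=
        s.set_ncard_biUnion_le _
    _ ≤ ∑ _a ∈ s, t * t := Finset.sum_le_sum fun a _ =>
        (Set.ncard_image2_le _ (Set.toFinite _) (Set.toFinite _)).trans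
          (Nat.mul_le_mul (h.ncard_neighborSet_inter_image_le hZ _ _)
            (h.ncard_neighborSet_inter_image_le hZ _ _))
    _ = s.card * (t * t) := by rw [Finset.sum_const, smul_eq_mul]

end IsPathLetterRep

theorem connected_Pk_Zt_free_nd_bounded_general (k : ℕ) (t : ℕ) :
    ∃ c : ℕ, ∀ (W : Type) [Fintype W] (G : SimpleGraph W), IsBPG G → G.Connected →
      ¬ IndSub (SimpleGraph.pathGraph k) G → ¬ IndSub (Zgraph t) G → nd G ≤ c := by
  refine ⟨k * (t * t), fun W _ G hG hconn hPk hZt => ?_⟩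
  obtain ⟨pos, letter, hrep⟩ := hG.exists_isPathLetterRep
  have hdiam : ∀ x y, G.dist x y + 1 < k := fun x y =>
    not_le.1 fun h => hPk (hconn.indSub_pathGraph_of_le_dist_add_one h)
  have : Nonempty W := hconn.nonempty
  obtain ⟨x₀, hx₀⟩ := Finite.exists_min letter
  have hwindow : ∀ x, letter x ∈ Finset.Ico (letter x₀) (letter x₀ + k) := fun x => by
    have := (hconn x₀ x).le_add_dist fun _ _ => hrep.letter_le_add_one_of_adj
    have := hdiam x₀ x
    exact Finset.mem_Ico.2 ⟨hx₀ x, by omega⟩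
  calc nd G ≤ (Set.range G.neighborSet).ncard := nd_le_ncard_range_neighborSet G
    _ ≤ (Finset.Ico (letter x₀) (letter x₀ + k)).card * (t * t) :=
      hrep.ncard_range_neighborSet_le hZt _ hwindow
    _ = k * (t * t) := by rw [Nat.card_Ico, Nat.add_sub_cancel_left]

/-- For all `k, t ≥ 1`, connected bipartite permutation graphs with no induced
`P_k` and no induced `Z_t` have bounded neighbourhood diversity. -/
theorem connected_Pk_Zt_free_nd_bounded (k : ℕ) (hk : 1 ≤ k) (t : ℕ) (ht : 1 ≤ t) :
    ∃ c : ℕ, ∀ (W : Type) [Fintype W] (G : SimpleGraph W), IsBPG G → G.Connected →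
      ¬ IndSub (SimpleGraph.pathGraph k) G → ¬ IndSub (Zgraph t) G → nd G ≤ c :=
  connected_Pk_Zt_free_nd_bounded_general k t
end

section
/- Let n ≥ 1 and α, β : {1, …, n} → ℕ, and for δ : {1, …, n} → ℕ let G(δ) denote the disjoint union of δ(i) copies of the path P_i over all i ∈ {1, …, n}. Let Γ = {(i, γ) : 1 ≤ i ≤ n, γ : {1, …, n} → ℕ, Σ_{t=1}^{n} γ(t)·(t + 1) ≤ i + 1} (the pairs (i, γ) for which the linear forest G(γ) is isomorphic to an induced subgraph of P_i). Then G(α) is isomorphic to an induced subgraph of G(β) if and only if there exists x : Γ → ℕ with finite support such that, for every i ∈ {1, …, n}, Σ_{γ : (i, γ) ∈ Γ} x(i, γ) ≤ β(i), and, for every t ∈ {1, …, n}, Σ_{(i, γ) ∈ Γ} x(i, γ)·γ(t) ≥ α(t). -/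
/-!
An induced embedding of `G(α)` into `G(β)` maps each path of `G(α)` into a single path of `G(β)`,
onto an interval of positions: images of consecutive vertices are adjacent, and by injectivity the
walk they form never turns back. Two paths mapped into the same host are separated by an unused
host vertex, since non-adjacency is preserved as well. Counting a path `P_{t+1}` together with the
vertex after it as `t + 2` positions, the paths mapped into a host `P_{i+1}` form some `G(γ)` with
`∑ γ t (t + 2) ≤ i + 2`, and `x i γ` counts the hosts `P_{i+1}` receiving `G(γ)`. Conversely, lay
out `G(γ)` from left to right with gaps in each of `x i γ` copies of `P_{i+1}`, and distribute the
paths of `G(α)` over the slots so created.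
-/

open SimpleGraph

/-- The vertex set of the linear forest with `δ i` copies of the path on
`i + 1` vertices, for each `i : Fin n` (so path sizes range over `1, …, n`):
a vertex is a triple (path index `i`, copy index `< δ i`, position `≤ i`). -/
def PFV (n : ℕ) (δ : Fin n → ℕ) : Type :=
  {v : Fin n × ℕ × ℕ // v.2.1 < δ v.1 ∧ v.2.2 ≤ (v.1 : ℕ)}

/-- The linear forest `G(δ)` consisting of the disjoint union of `δ i` copies
of the path `P_{i+1}` over all `i : Fin n`. -/
def PF (n : ℕ) (δ : Fin n → ℕ) : SimpleGraph (PFV n δ) :=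
  SimpleGraph.fromRel (fun x y =>
    x.1.1 = y.1.1 ∧ x.1.2.1 = y.1.2.1 ∧ y.1.2.2 = x.1.2.2 + 1)

open Finset

lemma forall_eq_add_or_forall_add_eq_of_unit_steps {g : ℕ → ℕ} {t : ℕ}
    (hstep : ∀ p < t, g (p + 1) = g p + 1 ∨ g p = g (p + 1) + 1)
    (hback : ∀ p, p + 2 ≤ t → g (p + 2) ≠ g p) :
    (∀ p ≤ t, g p = g 0 + p) ∨ ∀ p ≤ t, g p + p = g 0 := by
  induction t with
  | zero => exact Or.inl fun p hp => by obtain rfl := Nat.le_zero.1 hp; rfl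
  | succ t ih =>
    have hturn : 0 < t → g (t + 1) ≠ g (t - 1) := fun ht => by
      simpa [show t - 1 + 2 = t + 1 by omega] using hback (t - 1) (by omega)
    have extend {P : ℕ → Prop} (h : ∀ p ≤ t, P p) (ht : P (t + 1)) : ∀ p ≤ t + 1, P p :=
      fun p hp => (Nat.le_succ_iff.1 hp).elim (h p) (· ▸ ht)
    have first {P : ℕ → Prop} (h0 : P 0) : ∀ p ≤ 0, P p :=
      fun p hp => by obtain rfl := Nat.le_zero.1 hp; exact h0
    rcases ih (fun p hp => hstep p (by omega)) (fun p hp => hback p (by omega)) with h | h <;>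
      have ht := h t le_rfl <;> rcases hstep t (by omega) with hup | hdown
    · exact Or.inl (extend h (by omega))
    · rcases Nat.eq_zero_or_pos t with rfl | ht0
      · exact Or.inr (extend (first rfl) (by omega))
      · exact absurd (by have := h (t - 1) (by omega); omega) (hturn ht0)
    · rcases Nat.eq_zero_or_pos t with rfl | ht0
      · exact Or.inl (extend (first rfl) (by omega))
      · exact absurd (by have := h (t - 1) (by omega); omega) (hturn ht0)
    · exact Or.inr (extend h (by omega))

lemma image_Iic_eq_Icc_of_unit_steps {g : ℕ → ℕ} {t : ℕ}
    (hstep : ∀ p < t, g (p + 1) = g p + 1 ∨ g p = g (p + 1) + 1)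
    (hback : ∀ p, p + 2 ≤ t → g (p + 2) ≠ g p) :
    ∃ S, g '' Set.Iic t = Set.Icc S (S + t) := by
  rcases forall_eq_add_or_forall_add_eq_of_unit_steps hstep hback with h | h
  · refine ⟨g 0, Set.ext fun q => ⟨?_, fun hq => ⟨q - g 0, ?_, ?_⟩⟩⟩
    · rintro ⟨p, hp : p ≤ t, rfl⟩
      have := h p hp
      exact ⟨by omega, by omega⟩
    · simp only [Set.mem_Iic]; have := hq.2; omega
    · have := h (q - g 0) (by have := hq.2; omega); have := hq.1; omega
  · have ht := h t le_rfl
    refine ⟨g t, Set.ext fun q => ⟨?_, fun hq => ⟨g 0 - q, ?_, ?_⟩⟩⟩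
    · rintro ⟨p, hp : p ≤ t, rfl⟩
      have := h p hp
      exact ⟨by omega, by omega⟩
    · simp only [Set.mem_Iic]; have := hq.1; omega
    · have := h (g 0 - q) (by have := hq.1; omega); have := hq.2; omega

lemma sum_filter_lt_add_le {A B : Type*} [Fintype A] [LinearOrder B] (e : A → B) (w : A → ℕ)
    {a : A} {s : Finset A} (ha : a ∈ s) (hs : ∀ b, e b < e a → b ∈ s) :
    ∑ b with e b < e a, w b + w a ≤ ∑ b ∈ s, w b := by
  classical
  have hnot : a ∉ ({b | e b < e a} : Finset A) := by simp
  rw [add_comm, ← sum_insert hnot]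
  exact sum_le_sum_of_subset fun b hb => by
    rcases mem_insert.1 hb with rfl | hb
    exacts [ha, hs b (mem_filter.1 hb).2]

lemma finsum_card_filter_eq_mul {ι κ : Type*} [Fintype ι] [DecidableEq κ] (f : ι → κ)
    (g : κ → ℕ) : ∑ᶠ k, #{i | f i = k} * g k = ∑ i, g (f i) := by
  rw [finsum_eq_sum_of_support_subset _ (s := univ.image f), Finset.sum_comp]
  · simp only [smul_eq_mul, mul_comm]
  · intro k hk
    obtain ⟨i, hi⟩ := Finset.card_ne_zero.1 (left_ne_zero_of_mul hk)
    exact mem_image.2 ⟨i, mem_univ _, (mem_filter.1 hi).2⟩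

def Equiv.sigmaComm {ι κ : Type*} (F : κ → ι → Type*) : (Σ i, Σ k, F k i) ≃ Σ k, Σ i, F k i where
  toFun p := ⟨p.2.1, p.1, p.2.2⟩
  invFun p := ⟨p.2.1, p.1, p.2.2⟩
  left_inv _ := rfl
  right_inv _ := rfl

lemma exists_sigma_embedding_fst_eq {ι : Type*} {X Y : ι → Type*} [∀ i, Fintype (X i)]
    [∀ i, Fintype (Y i)] (h : ∀ i, Fintype.card (X i) ≤ Fintype.card (Y i)) :
    ∃ e : (Σ i, X i) ↪ Σ i, Y i, ∀ p, (e p).1 = p.1 :=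
  ⟨.sigmaMap (.refl ι) fun i => (Function.Embedding.nonempty_of_card_le (h i)).some,
    fun _ => rfl⟩

/-- Paths `a` with `len a + 1` vertices placed, as an induced subgraph, into host paths `h` with
`cap h + 1` vertices: `a` occupies the positions `start a, …, start a + len a` of `target a`. -/
structure Placement {A H : Type*} (len : A → ℕ) (cap : H → ℕ) where
  target : A → H
  start : A → ℕ
  start_add_le : ∀ a, start a + len a ≤ cap (target a)
  separated : ∀ a b, a ≠ b → target a = target b →
    start a + len a + 2 ≤ start b ∨ start b + len b + 2 ≤ start a

namespace Placement

variable {A H : Type*} {len : A → ℕ} {cap : H → ℕ}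

lemma sum_len_add_two_le [Fintype A] [DecidableEq H] (P : Placement len cap) (h : H) :
    ∑ a with P.target a = h, (len a + 2) ≤ cap h + 2 := by
  let slot (a : A) : Finset ℕ := Ico (P.start a) (P.start a + len a + 2)
  calc ∑ a with P.target a = h, (len a + 2)
      = #(({a | P.target a = h} : Finset A).biUnion slot) := by
        rw [card_biUnion]
        · exact sum_congr rfl fun a _ => by simp only [slot, Nat.card_Ico]; omega
        · intro a ha b hb hab
          have := P.separated a b hab ((mem_filter.1 ha).2.trans (mem_filter.1 hb).2.symm)
          simp only [Function.onFun, Finset.disjoint_left, slot, mem_Ico]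
          omega
    _ ≤ #(range (cap h + 2)) := card_le_card fun z hz => by
        obtain ⟨a, ha, hz⟩ := mem_biUnion.1 hz
        have := P.start_add_le a
        rw [(mem_filter.1 ha).2] at this
        simp only [slot, mem_Ico] at hz
        exact mem_range.2 (by omega)
    _ = cap h + 2 := card_range _

def comap (P : Placement len cap) {A' : Type*} {len' : A' → ℕ} (e : A' ↪ A)
    (he : ∀ a, len (e a) = len' a) : Placement len' cap where
  target := P.target ∘ e
  start := P.start ∘ e
  start_add_le a := he a ▸ P.start_add_le (e a)
  separated a b hab hh := he a ▸ he b ▸ P.separated _ _ (e.injective.ne hab) hh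

def map (P : Placement len cap) {H' : Type*} {cap' : H' → ℕ} (g : H ↪ H')
    (hg : ∀ h, cap h ≤ cap' (g h)) : Placement len cap' where
  target := g ∘ P.target
  start := P.start
  start_add_le a := (P.start_add_le a).trans (hg _)
  separated a b hab hh := P.separated a b hab (g.injective hh)

def sigma {ι : Type*} {A : ι → Type*} {len : ∀ i, A i → ℕ} {cap : ι → ℕ}
    (P : ∀ i, Placement (len i) fun _ : Unit => cap i) :
    Placement (fun a : Σ i, A i => len a.1 a.2) cap where
  target a := a.1
  start a := (P a.1).start a.2
  start_add_le a := (P a.1).start_add_le a.2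
  separated := by
    rintro ⟨i, a⟩ ⟨j, b⟩ hab (rfl : i = j)
    exact (P i).separated a b (fun h => hab (h ▸ rfl)) rfl

/-- The paths side by side in the order of an enumeration of `A`, each followed by one gap. -/
noncomputable def layout [Fintype A] (c : ℕ) (h : ∑ a, (len a + 2) ≤ c + 2) :
    Placement len fun _ : Unit => c where
  target _ := ()
  start a := ∑ b with Fintype.equivFin A b < Fintype.equivFin A a, (len b + 2)
  start_add_le a := by
    have := (sum_filter_lt_add_le (Fintype.equivFin A) (fun b => len b + 2) (mem_univ a)
      fun b _ => mem_univ b).trans h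
    omega
  separated a b hab _ := by
    have before {a b : A} (hlt : Fintype.equivFin A a < Fintype.equivFin A b) :=
      sum_filter_lt_add_le (Fintype.equivFin A) (fun b => len b + 2)
        (mem_filter.2 ⟨mem_univ a, hlt⟩) fun c hc => mem_filter.2 ⟨mem_univ c, hc.trans hlt⟩
    exact (lt_or_gt_of_ne ((Fintype.equivFin A).injective.ne hab)).imp before before

end Placement

abbrev PFComp (n : ℕ) (δ : Fin n → ℕ) : Type := Σ i : Fin n, Fin (δ i)

namespace PFV

variable {n : ℕ} {δ : Fin n → ℕ}

def comp (v : PFV n δ) : PFComp n δ := ⟨v.1.1, v.1.2.1, v.2.1⟩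

def pos (v : PFV n δ) : ℕ := v.1.2.2

lemma pos_le (v : PFV n δ) : v.pos ≤ v.comp.1 := v.2.2

lemma comp_eq_comp_iff {v w : PFV n δ} :
    v.comp = w.comp ↔ v.1.1 = w.1.1 ∧ v.1.2.1 = w.1.2.1 := by
  obtain ⟨⟨t, c, p⟩, _⟩ := v
  obtain ⟨⟨t', c', p'⟩, _⟩ := w
  constructor
  · intro h
    obtain ⟨rfl, h⟩ := Sigma.mk.inj_iff.mp h
    exact ⟨rfl, congrArg Fin.val (eq_of_heq h)⟩
  · rintro ⟨rfl, rfl⟩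
    rfl

lemma ext_iff {v w : PFV n δ} : v = w ↔ v.comp = w.comp ∧ v.pos = w.pos := by
  rw [comp_eq_comp_iff, and_assoc]
  exact Subtype.ext_iff.trans (Prod.ext_iff.trans (and_congr_right fun _ => Prod.ext_iff))

def mk (a : PFComp n δ) (p : ℕ) : PFV n δ := ⟨(a.1, a.2, min p a.1), a.2.2, min_le_right _ _⟩

@[simp] lemma comp_mk (a : PFComp n δ) (p : ℕ) : (mk a p).comp = a := rfl

lemma pos_mk {a : PFComp n δ} {p : ℕ} (hp : p ≤ a.1) : (mk a p).pos = p := min_eq_left hp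

lemma mk_comp_pos (v : PFV n δ) : mk v.comp v.pos = v :=
  ext_iff.2 ⟨rfl, pos_mk v.pos_le⟩

end PFV

open PFV

lemma PF.adj_iff {n : ℕ} {δ : Fin n → ℕ} {v w : PFV n δ} :
    (PF n δ).Adj v w ↔ v.comp = w.comp ∧ (w.pos = v.pos + 1 ∨ v.pos = w.pos + 1) := by
  simp only [PF, fromRel_adj, ne_eq, ext_iff, comp_eq_comp_iff, pos]
  omega

abbrev PFPlacement (n : ℕ) (α β : Fin n → ℕ) : Type :=
  Placement (fun a : PFComp n α => (a.1 : ℕ)) (fun h : PFComp n β => (h.1 : ℕ))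

section Embedding

variable {n : ℕ} {α β : Fin n → ℕ}

lemma PF.image_comp_eq_interval (f : PF n α ↪g PF n β) (a : PFComp n α) :
    ∃ (h : PFComp n β) (S : ℕ), S + a.1 ≤ h.1 ∧
      f '' {v | v.comp = a} = {w | w.comp = h ∧ w.pos ∈ Set.Icc S (S + a.1)} := by
  set g : ℕ → ℕ := fun p => (f (mk a p)).pos
  have hadj : ∀ p : ℕ, p < a.1 → (PF n β).Adj (f (mk a p)) (f (mk a (p + 1))) := fun p hp =>
    f.map_rel_iff.2 (PF.adj_iff.2 ⟨rfl, Or.inl (by rw [pos_mk hp, pos_mk hp.le])⟩)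
  have hcomp : ∀ p : ℕ, p ≤ a.1 → (f (mk a p)).comp = (f (mk a 0)).comp := by
    intro p
    induction p with
    | zero => exact fun _ => rfl
    | succ p ih => exact fun hp => (PF.adj_iff.1 (hadj p hp)).1.symm.trans (ih (by omega))
  have hstep : ∀ p : ℕ, p < a.1 → g (p + 1) = g p + 1 ∨ g p = g (p + 1) + 1 :=
    fun p hp => (PF.adj_iff.1 (hadj p hp)).2
  have hback : ∀ p : ℕ, p + 2 ≤ a.1 → g (p + 2) ≠ g p := by
    intro p hp hgp
    have := congrArg pos
      (f.injective (ext_iff.2 ⟨(hcomp _ hp).trans (hcomp p (by omega)).symm, hgp⟩))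
    rw [pos_mk hp, pos_mk (by omega)] at this
    omega
  obtain ⟨S, hS⟩ := image_Iic_eq_Icc_of_unit_steps hstep hback
  refine ⟨(f (mk a 0)).comp, S, ?_, Set.ext fun w => ⟨?_, ?_⟩⟩
  · obtain ⟨p, hp, hgp⟩ : S + a.1 ∈ g '' Set.Iic a.1 := hS ▸ ⟨by omega, le_rfl⟩
    have := (f (mk a p)).pos_le
    rw [hcomp p hp] at this
    change (f (mk a p)).pos = _ at hgp
    omega
  · rintro ⟨v, rfl, rfl⟩
    rw [← hS, ← mk_comp_pos v]
    exact ⟨hcomp _ v.pos_le, v.pos, v.pos_le, rfl⟩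
  · rintro ⟨hw, hpos⟩
    rw [← hS] at hpos
    obtain ⟨p, hp, hgp⟩ := hpos
    exact ⟨mk a p, comp_mk _ _, ext_iff.2 ⟨(hcomp p hp).trans hw.symm, hgp⟩⟩

lemma PF.add_two_le_of_image_eq_interval (f : PF n α ↪g PF n β) {a b : PFComp n α}
    {h : PFComp n β} {Sa Sb : ℕ} (hab : a ≠ b) (hSb : Sb + b.1 ≤ h.1)
    (ha : f '' {v | v.comp = a} = {w | w.comp = h ∧ w.pos ∈ Set.Icc Sa (Sa + a.1)})
    (hb : f '' {v | v.comp = b} = {w | w.comp = h ∧ w.pos ∈ Set.Icc Sb (Sb + b.1)})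
    (hle : Sa ≤ Sb) : Sa + a.1 + 2 ≤ Sb := by
  have preimage {c : PFComp n α} {S : ℕ}
      (hc : f '' {v | v.comp = c} = {w | w.comp = h ∧ w.pos ∈ Set.Icc S (S + c.1)})
      (q : ℕ) (hq : q ∈ Set.Icc S (S + c.1)) (hqh : q ≤ h.1) :
      ∃ v, v.comp = c ∧ f v = mk h q := by
    have : mk h q ∈ f '' {v | v.comp = c} := hc ▸ ⟨comp_mk _ _, by rwa [pos_mk hqh]⟩
    exact this
  by_contra hlt
  obtain ⟨vb, rfl, hvb⟩ := preimage hb Sb ⟨le_rfl, by omega⟩ (by omega)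
  rcases (by omega : Sb ≤ Sa + a.1 ∨ Sb = Sa + a.1 + 1) with hin | hnext
  · obtain ⟨va, rfl, hva⟩ := preimage ha Sb ⟨hle, hin⟩ (by omega)
    exact hab (congrArg comp (f.injective (hva.trans hvb.symm)))
  · obtain ⟨va, rfl, hva⟩ := preimage ha (Sa + a.1) ⟨by omega, le_rfl⟩ (by omega)
    have hadj : (PF n β).Adj (f va) (f vb) := by
      rw [hva, hvb, PF.adj_iff, pos_mk (by omega), pos_mk (by omega)]
      exact ⟨rfl, Or.inl hnext⟩
    exact hab (PF.adj_iff.1 (f.map_rel_iff.1 hadj)).1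

lemma PF.nonempty_placement (f : PF n α ↪g PF n β) : Nonempty (PFPlacement n α β) := by
  choose h S hfit himg using PF.image_comp_eq_interval f
  refine ⟨⟨h, S, hfit, fun a b hab hh => ?_⟩⟩
  rcases le_total (S a) (S b) with hle | hle
  · exact Or.inl (PF.add_two_le_of_image_eq_interval f hab (hh ▸ hfit b) (hh ▸ himg a)
      (himg b) hle)
  · exact Or.inr (PF.add_two_le_of_image_eq_interval f (Ne.symm hab) (hh ▸ hfit a)
      (hh ▸ himg b) (himg a) hle)

lemma Placement.nonempty_embedding (P : PFPlacement n α β) : Nonempty (PF n α ↪g PF n β) := by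
  let F : PFV n α → PFV n β := fun v => PFV.mk (P.target v.comp) (P.start v.comp + v.pos)
  have hpos (v : PFV n α) : (F v).pos = P.start v.comp + v.pos :=
    pos_mk (by have := P.start_add_le v.comp; have := v.pos_le; omega)
  have hsep {v w : PFV n α} (hc : v.comp ≠ w.comp) (ht : (F v).comp = (F w).comp) :
      (F v).pos + 2 ≤ (F w).pos ∨ (F w).pos + 2 ≤ (F v).pos := by
    have := v.pos_le
    have := w.pos_le
    rw [hpos, hpos]
    rcases P.separated _ _ hc ht with h | h <;> omega
  refine ⟨⟨⟨F, fun v w hvw => ?_⟩, fun {v w} => ?_⟩⟩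
  · rw [ext_iff] at hvw ⊢
    by_cases hc : v.comp = w.comp
    · rw [hpos, hpos, hc] at hvw
      exact ⟨hc, by omega⟩
    · rcases hsep hc hvw.1 with h | h <;> omega
  · change (PF n β).Adj (F v) (F w) ↔ _
    rw [PF.adj_iff, PF.adj_iff]
    by_cases hc : v.comp = w.comp
    · rw [hpos, hpos]
      simp only [F, comp_mk, hc, true_and]
      omega
    · refine iff_of_false (fun ⟨ht, hadj⟩ => ?_) (fun h => hc h.1)
      rcases hsep hc ht with h | h <;> omega

end Embedding

def IsPackingSolution {n : ℕ} (α β : Fin n → ℕ) (x : Fin n → (Fin n → ℕ) → ℕ) : Prop :=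
  (Function.support (Function.uncurry x)).Finite ∧
    (∀ (i : Fin n) (γ : Fin n → ℕ), x i γ ≠ 0 →
      ∑ t : Fin n, γ t * ((t : ℕ) + 2) ≤ (i : ℕ) + 2) ∧
    (∀ i : Fin n, (∑ᶠ γ : Fin n → ℕ, x i γ) ≤ β i) ∧
    (∀ t : Fin n, α t ≤ ∑ᶠ (i : Fin n) (γ : Fin n → ℕ), x i γ * γ t)

namespace Placement

variable {n : ℕ} {α β : Fin n → ℕ} (P : PFPlacement n α β)

def pattern (h : PFComp n β) (t : Fin n) : ℕ := #{c : Fin (α t) | P.target ⟨t, c⟩ = h}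

lemma sum_pattern_mul_le (h : PFComp n β) : ∑ t, P.pattern h t * ((t : ℕ) + 2) ≤ h.1 + 2 :=
  calc ∑ t, P.pattern h t * ((t : ℕ) + 2) = ∑ a with P.target a = h, ((a.1 : ℕ) + 2) := by
        simp only [pattern, sum_filter, Fintype.sum_sigma, card_filter, sum_mul, ite_mul,
          one_mul, zero_mul]
    _ ≤ h.1 + 2 := P.sum_len_add_two_le h

lemma sum_pattern (t : Fin n) : ∑ h, P.pattern h t = α t := by
  simp only [pattern]
  rw [← card_eq_sum_card_fiberwise (fun _ _ => mem_univ _), card_univ, Fintype.card_fin]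

def count (i : Fin n) (γ : Fin n → ℕ) : ℕ := #{c : Fin (β i) | P.pattern ⟨i, c⟩ = γ}

lemma exists_pattern_of_count_ne_zero {i : Fin n} {γ : Fin n → ℕ} (h : P.count i γ ≠ 0) :
    ∃ c, P.pattern ⟨i, c⟩ = γ := by
  obtain ⟨c, hc⟩ := Finset.card_ne_zero.1 h
  exact ⟨c, (mem_filter.1 hc).2⟩

lemma isPackingSolution_count : IsPackingSolution α β P.count := by
  refine ⟨(Set.finite_range fun h : PFComp n β => (h.1, P.pattern h)).subset ?_,
    fun i γ hx => ?_, fun i => ?_, fun t => ?_⟩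
  · rintro ⟨i, γ⟩ hx
    obtain ⟨c, hc⟩ := P.exists_pattern_of_count_ne_zero hx
    exact ⟨⟨i, c⟩, Prod.ext rfl hc⟩
  · obtain ⟨c, rfl⟩ := P.exists_pattern_of_count_ne_zero hx
    exact P.sum_pattern_mul_le ⟨i, c⟩
  · simpa [count] using (finsum_card_filter_eq_mul (fun c => P.pattern ⟨i, c⟩) fun _ => 1).le
  · simp only [count, finsum_card_filter_eq_mul, finsum_eq_sum_of_fintype]
    rw [← Fintype.sum_sigma (fun h : PFComp n β => P.pattern h t), sum_pattern]

end Placement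

lemma IsPackingSolution.nonempty_placement {n : ℕ} {α β : Fin n → ℕ}
    {x : Fin n → (Fin n → ℕ) → ℕ} (hx : IsPackingSolution α β x) :
    Nonempty (PFPlacement n α β) := by
  obtain ⟨hfin, hpack, hcopies, hcover⟩ := hx
  have hsupp (i : Fin n) : (Function.support (x i)).Finite :=
    hfin.preimage (Prod.mk_right_injective i).injOn
  -- the `x i γ` copies of `P_{i+1}` that receive a copy of `G(γ)`
  let Box (i : Fin n) : Type := Σ γ : (hsupp i).toFinset, Fin (x i γ)
  have hboxes (i : Fin n) : Fintype.card (Box i) ≤ Fintype.card (Fin (β i)) := by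
    have := hcopies i
    rw [finsum_eq_sum _ (hsupp i)] at this
    simpa [Box, Fintype.card_sigma, sum_attach] using this
  obtain ⟨host, hhost⟩ := exists_sigma_embedding_fst_eq hboxes
  have hslots (t : Fin n) :
      Fintype.card (Fin (α t)) ≤ Fintype.card (Σ b : Σ i, Box i, Fin (b.2.1.1 t)) := by
    have hinner (i : Fin n) : ∑ᶠ γ, x i γ * γ t = ∑ γ ∈ (hsupp i).toFinset, x i γ * γ t :=
      finsum_eq_sum_of_support_subset _
        ((Set.Finite.coe_toFinset _).symm ▸ Function.support_mul_subset_left _ _)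
    have := hcover t
    simp only [finsum_eq_sum_of_fintype, hinner] at this
    simp only [Box, Fintype.card_sigma, Fintype.sum_sigma, sum_const, card_univ,
      Fintype.card_fin, smul_eq_mul]
    exact this.trans_eq (sum_congr rfl fun i _ => (sum_coe_sort _ _).symm)
  obtain ⟨slot, hslot⟩ := exists_sigma_embedding_fst_eq hslots
  have hfits (b : Σ i, Box i) : ∑ a : PFComp n b.2.1.1, ((a.1 : ℕ) + 2) ≤ b.1 + 2 := by
    simpa [Fintype.sum_sigma] using hpack b.1 _ ((hsupp b.1).mem_toFinset.1 b.2.1.2)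
  let boxes := Placement.sigma (cap := fun b : Σ i, Box i => (b.1 : ℕ)) fun b =>
    Placement.layout b.1 (hfits b)
  exact ⟨(boxes.map host fun b => (congrArg Fin.val (hhost b)).ge).comap
    (slot.trans (Equiv.sigmaComm _).toEmbedding) fun a => congrArg Fin.val (hslot a)⟩

theorem linear_forest_embedding_iff_lp_general (n : ℕ) (α β : Fin n → ℕ) :
    Nonempty (PF n α ↪g PF n β) ↔
      ∃ x : Fin n → (Fin n → ℕ) → ℕ,
        (Function.support (Function.uncurry x)).Finite ∧
        (∀ (i : Fin n) (γ : Fin n → ℕ), x i γ ≠ 0 →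
          ∑ t : Fin n, γ t * ((t : ℕ) + 2) ≤ (i : ℕ) + 2) ∧
        (∀ i : Fin n, (∑ᶠ γ : Fin n → ℕ, x i γ) ≤ β i) ∧
        (∀ t : Fin n, α t ≤ ∑ᶠ (i : Fin n) (γ : Fin n → ℕ), x i γ * γ t) := by
  calc Nonempty (PF n α ↪g PF n β) ↔ Nonempty (PFPlacement n α β) :=
        ⟨fun ⟨f⟩ => PF.nonempty_placement f, fun ⟨P⟩ => P.nonempty_embedding⟩
    _ ↔ ∃ x, IsPackingSolution α β x :=
        ⟨fun ⟨P⟩ => ⟨P.count, P.isPackingSolution_count⟩, fun ⟨_, hx⟩ => hx.nonempty_placement⟩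

/-- `G(α)` is an induced subgraph of `G(β)` iff the natural system of linear
constraints is compatible.  Here `x i γ` is the number of copies of the linear
forest with `γ t` components `P_{t+1}` (for `t : Fin n`) packed into copies of
the path `P_{i+1}`; the packing condition `∑ t, γ t · (t + 2) ≤ i + 2` (in
`Fin`-indexing) says exactly that this forest is an induced subgraph of
`P_{i+1}`. -/
theorem linear_forest_embedding_iff_lp (n : ℕ) (hn : 1 ≤ n) (α β : Fin n → ℕ) :
    Nonempty (PF n α ↪g PF n β) ↔
      ∃ x : Fin n → (Fin n → ℕ) → ℕ,
        (Function.support (Function.uncurry x)).Finite ∧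
        (∀ (i : Fin n) (γ : Fin n → ℕ), x i γ ≠ 0 →
          ∑ t : Fin n, γ t * ((t : ℕ) + 2) ≤ (i : ℕ) + 2) ∧
        (∀ i : Fin n, (∑ᶠ γ : Fin n → ℕ, x i γ) ≤ β i) ∧
        (∀ t : Fin n, α t ≤ ∑ᶠ (i : Fin n) (γ : Fin n → ℕ), x i γ * γ t) :=
  linear_forest_embedding_iff_lp_general n α β
end
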